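/- arXiv:1810.07023 — 8 statements merged into one kernel-verified Lean document; each statement's English description precedes it below -/
import Mathlib

section
/- Let G be a connected, locally finite, infinite graph such that for every vertex x of G and every integer r ≥ 1 the ball G_r(x) is Hamiltonian. Then for every finite set S of vertices of G there exists a cycle in G containing all vertices of S. -/
open SimpleGraph

/-- The set of vertices joined to `u` by a walk (equivalently, a path) of length at most `r`. -/
def SimpleGraph.ballSet {V : Type*} (G : SimpleGraph V) (u : V) (r : ℕ) : Set V :=
  {v | ∃ p : G.Walk u v, p.length ≤ r}

/-- The ball of radius `r` centered at `u`: the subgraph induced on `ballSet G u r`. -/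
def SimpleGraph.ballGraph {V : Type*} (G : SimpleGraph V) (u : V) (r : ℕ) :
    SimpleGraph (G.ballSet u r) :=
  G.induce (G.ballSet u r)

/-- A graph is Hamiltonian if it contains a cycle through all of its vertices. -/
def SimpleGraph.IsHamiltonianGraph {W : Type*} (H : SimpleGraph W) : Prop :=
  ∃ (v : W) (c : H.Walk v v), c.IsCycle ∧ ∀ x : W, x ∈ c.support

/-- `H` is `k`-connected: deleting any set of fewer than `k` vertices leaves a connected
graph on at least two vertices. -/
def SimpleGraph.KConn {W : Type*} (H : SimpleGraph W) (k : ℕ) : Prop :=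
  ∀ S : Set W, S.Finite → S.ncard < k → Sᶜ.Nontrivial ∧ (H.induce Sᶜ).Connected

/-- The independence number of a graph: the supremum of the sizes of finite sets of
pairwise non-adjacent vertices. -/
noncomputable def SimpleGraph.indepNum' {W : Type*} (H : SimpleGraph W) : ℕ :=
  sSup {n | ∃ s : Finset W, s.card = n ∧ ∀ x ∈ s, ∀ y ∈ s, x ≠ y → ¬ H.Adj x y}

theorem stmt3 {V : Type*} (G : SimpleGraph V)
    (hconn : G.Connected)
    (hinf : Infinite V)
    (hlf : ∀ v : V, (G.neighborSet v).Finite)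
    (hballs : ∀ (x : V) (r : ℕ), 1 ≤ r → (G.ballGraph x r).IsHamiltonianGraph) :
    ∀ S : Set V, S.Finite →
      ∃ (v : V) (c : G.Walk v v), c.IsCycle ∧ ∀ s ∈ S, s ∈ c.support := by
  intro S hS
  classical
  have hx : Nonempty V := inferInstance
  obtain ⟨x⟩ := hx
  -- choose a walk from x to each vertex
  have hw : ∀ s : V, ∃ p : G.Walk x s, True := fun s =>
    ⟨(hconn.preconnected x s).some, trivial⟩
  choose w _ using hw
  set r : ℕ := hS.toFinset.sup (fun s => (w s).length) + 1 with hr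
  have hr1 : 1 ≤ r := Nat.le_add_left 1 _
  have hSball : ∀ s ∈ S, s ∈ G.ballSet x r := by
    intro s hs
    exact ⟨w s, le_trans (Finset.le_sup (f := fun s => (w s).length) (hS.mem_toFinset.mpr hs)) (Nat.le_succ _)⟩
  obtain ⟨v, c, hc, hall⟩ := hballs x r hr1
  refine ⟨(v : V), c.map (SimpleGraph.Embedding.induce (G.ballSet x r)).toHom,
    hc.map Subtype.val_injective, ?_⟩
  intro s hs
  erw [SimpleGraph.Walk.support_map]
  exact List.mem_map.mpr ⟨⟨s, hSball s hs⟩, hall _, rfl⟩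
end

section
/- There exists an infinite, connected, locally finite graph H with exactly one end such that for every vertex x of H and every integer r ≥ 1 the ball H_r(x) is Hamiltonian. -/
open SimpleGraph

/-- The independence number of a graph: the supremum of the sizes of finite sets of
pairwise non-adjacent vertices. -/
noncomputable def SimpleGraph.indepNumSup {W : Type*} (H : SimpleGraph W) : ℕ :=
  sSup {n | ∃ s : Finset W, s.card = n ∧ ∀ x ∈ s, ∀ y ∈ s, x ≠ y → ¬ H.Adj x y}

/-! ### Auxiliary construction: the square of a ray -/

/-- The graph on `ℕ` where `m` and `n` are adjacent iff `|m - n| ∈ {1, 2}`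
(the square of a one-way infinite ray). -/
def GG : SimpleGraph ℕ := SimpleGraph.fromRel (fun m n => n = m + 1 ∨ n = m + 2)

lemma GG_adj_iff {m n : ℕ} : GG.Adj m n ↔ (n = m+1 ∨ n = m+2 ∨ m = n+1 ∨ m = n+2) := by
  simp only [GG, fromRel_adj]
  constructor
  · rintro ⟨h, h'⟩; omega
  · intro h; omega

lemma GG_adj_succ (n : ℕ) : GG.Adj n (n+1) := GG_adj_iff.2 (by omega)

lemma GG_reach (n : ℕ) : GG.Reachable 0 n := by
  induction n with
  | zero => rfl
  | succ n ih => exact ih.trans (GG_adj_succ n).reachable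

lemma GG_connected : GG.Connected := by
  rw [connected_iff]
  exact ⟨fun a b => (GG_reach a).symm.trans (GG_reach b), ⟨0⟩⟩

lemma GG_locfin (v : ℕ) : (GG.neighborSet v).Finite := by
  apply (Set.finite_Icc (v-2) (v+2)).subset
  intro u hu
  have := GG_adj_iff.1 hu
  simp only [Set.mem_Icc]; omega

noncomputable instance : GG.LocallyFinite := fun v => (GG_locfin v).fintype
instance : Fact GG.Preconnected := ⟨GG_connected.preconnected⟩

/-! ### Ends -/

lemma GG_comp_unique (K : Finset ℕ) (C D : GG.ComponentCompl ↑K)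
    (hC : C.supp.Infinite) (hD : D.supp.Infinite) : C = D := by
  set N := K.sup id + 1 with hN
  have hNK : ∀ n, N ≤ n → n ∉ (K : Set ℕ) := by
    intro n h hn
    have := Finset.le_sup (f := id) hn
    simp only [id] at this
    omega
  have step : ∀ j, GG.componentComplMk (hNK (N+j) (by omega)) =
      GG.componentComplMk (hNK N le_rfl) := by
    intro j
    induction j with
    | zero => rfl
    | succ j ih =>
      exact (GG.componentComplMk_eq_of_adj (hNK (N+j) (by omega)) (hNK (N+j+1) (by omega))
        (GG_adj_succ (N+j))).symm.trans ih
  have key : ∀ (C : GG.ComponentCompl ↑K), C.supp.Infinite →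
      C = GG.componentComplMk (hNK N le_rfl) := by
    intro C hC
    obtain ⟨v, hv, hvN⟩ : ∃ v ∈ C.supp, N ≤ v := by
      by_contra h
      push_neg at h
      exact hC ((Set.finite_Iio N).subset (fun v hv => h v hv))
    obtain ⟨vK, hvC⟩ := ComponentCompl.mem_supp_iff.1 hv
    have : GG.componentComplMk vK = GG.componentComplMk (hNK (N + (v - N)) (by omega)) := by
      congr 1
      omega
    rw [← hvC, this, step]
  rw [key C hC, key D hD]

lemma GG_end_unique : ∃ e, GG.end = {e} := by
  obtain ⟨e, he⟩ := GG.nonempty_ends_of_infinite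
  refine ⟨e, Set.eq_singleton_iff_unique_mem.2 ⟨he, ?_⟩⟩
  intro s hs
  funext K
  exact GG_comp_unique K.unop (s K) (e K)
    (GG.end_componentCompl_infinite ⟨s, hs⟩ K) (GG.end_componentCompl_infinite ⟨e, he⟩ K)

/-! ### Balls are intervals -/

lemma GG_walk_bound : ∀ {x v : ℕ} (p : GG.Walk x v),
    v ≤ x + 2 * p.length ∧ x ≤ v + 2 * p.length := by
  intro x v p
  induction p with
  | nil => simp
  | cons h q ih =>
    have := GG_adj_iff.1 h
    simp only [SimpleGraph.Walk.length_cons]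
    omega

lemma GG_exists_walk : ∀ (r x v : ℕ), v ≤ x + 2*r → x ≤ v + 2*r →
    ∃ p : GG.Walk x v, p.length ≤ r := by
  intro r
  induction r with
  | zero => intro x v h1 h2; have : x = v := by omega
            subst this; exact ⟨SimpleGraph.Walk.nil, le_rfl⟩
  | succ r ih =>
    intro x v h1 h2
    rcases lt_trichotomy x v with h | h | h
    · set y := min v (x + 2) with hy
      have hadj : GG.Adj x y := GG_adj_iff.2 (by omega)
      obtain ⟨p, hp⟩ := ih y v (by omega) (by omega)
      exact ⟨SimpleGraph.Walk.cons hadj p, by simpa using Nat.succ_le_succ hp⟩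
    · subst h; exact ⟨SimpleGraph.Walk.nil, by simp⟩
    · set y := max v (x - 2) with hy
      have hadj : GG.Adj x y := GG_adj_iff.2 (by omega)
      obtain ⟨p, hp⟩ := ih y v (by omega) (by omega)
      exact ⟨SimpleGraph.Walk.cons hadj p, by simpa using Nat.succ_le_succ hp⟩

lemma GG_ballSet_eq (x r : ℕ) : GG.ballSet x r = Set.Icc (x - 2*r) (x + 2*r) := by
  ext v
  simp only [SimpleGraph.ballSet, Set.mem_setOf_eq, Set.mem_Icc]
  constructor
  · rintro ⟨p, hp⟩
    have := GG_walk_bound p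
    omega
  · rintro ⟨h1, h2⟩
    exact GG_exists_walk r x v (by omega) (by omega)

/-! ### Hamiltonian cycles on intervals -/

section Ham
variable (a b : ℕ)

lemma ind_adj {S : Set ℕ} {m n : ℕ} (hm : m ∈ S) (hn : n ∈ S) (h : GG.Adj m n) :
    (GG.induce S).Adj ⟨m, hm⟩ ⟨n, hn⟩ := h

/-- Hamiltonian path from `c` to `c+1` covering `[c, c+k+1]` inside `GG.induce (Set.Icc a b)`. -/
def ham : (k c : ℕ) → (hac : a ≤ c) → (hcb : c + k + 1 = b) →
    (GG.induce (Set.Icc a b)).Walk ⟨c, ⟨hac, by omega⟩⟩ ⟨c+1, ⟨by omega, by omega⟩⟩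
  | 0, c, hac, hcb =>
      Walk.cons (ind_adj _ _ (GG_adj_iff.2 (by omega))) Walk.nil
  | (k+1), c, hac, hcb =>
      Walk.cons (v := (⟨c+2, ⟨by omega, by omega⟩⟩ : Set.Icc a b))
        (ind_adj _ _ (GG_adj_iff.2 (by omega)))
        (ham k (c+1) (by omega) (by omega)).reverse

theorem ham_support : (k c : ℕ) → (hac : a ≤ c) → (hcb : c + k + 1 = b) →
    ((ham a b k c hac hcb).support.map Subtype.val).Perm (List.range' c (k+2))
  | 0, c, hac, hcb => by
      simp [ham, List.range']
  | (k+1), c, hac, hcb => by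
      have ih := ham_support k (c+1) (by omega) (by omega)
      rw [ham]
      simp only [Walk.support_cons, Walk.support_reverse, List.map_cons, List.map_reverse]
      rw [show k+1+2 = (k+2)+1 from rfl, List.range'_succ]
      exact List.Perm.cons c ((List.reverse_perm _).trans ih)

theorem hamIcc (hab : a + 2 ≤ b) : (GG.induce (Set.Icc a b)).IsHamiltonianGraph := by
  obtain ⟨k, hk⟩ : ∃ k, a + (k+1) + 1 = b := ⟨b - a - 2, by omega⟩
  have hA : a ∈ Set.Icc a b := ⟨le_rfl, by omega⟩
  have hA1 : a + 1 ∈ Set.Icc a b := ⟨by omega, by omega⟩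
  set p := ham a b (k+1) a le_rfl hk with hp
  have hperm := ham_support a b (k+1) a le_rfl hk
  have hnd : p.support.Nodup :=
    List.Nodup.of_map _ (hperm.nodup_iff.2 (List.nodup_range' _ (by omega)))
  have hpath : p.IsPath := (Walk.isPath_def _).2 hnd
  have hadj : (GG.induce (Set.Icc a b)).Adj ⟨a+1, hA1⟩ ⟨a, hA⟩ :=
    ind_adj _ _ (GG_adj_iff.2 (by omega))
  have hedge : s((⟨a+1, hA1⟩ : Set.Icc a b), ⟨a, hA⟩) ∉ p.edges := by
    rw [hp, ham]
    intro hmem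
    rw [Walk.edges_cons, List.mem_cons] at hmem
    rcases hmem with h | h
    · rw [Sym2.eq_iff] at h
      rcases h with ⟨h1, h2⟩ | ⟨h1, h2⟩ <;>
        · have := congrArg Subtype.val h1
          have := congrArg Subtype.val h2
          simp only at *
          omega
    · rw [Sym2.eq_swap] at h
      have hmemsup := Walk.fst_mem_support_of_mem_edges _ h
      have hs := ham_support a b k (a+1) (by omega) (by omega)
      have : (a : ℕ) ∈
          (((ham a b k (a+1) (by omega) (by omega)).reverse).support.map Subtype.val) :=
        List.mem_map_of_mem (f := Subtype.val) hmemsup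
      rw [Walk.support_reverse, List.map_reverse, List.mem_reverse] at this
      have := (hs.mem_iff).1 this
      rw [List.mem_range'_1] at this
      omega
  refine ⟨⟨a+1, hA1⟩, Walk.cons hadj p, (Walk.cons_isCycle_iff p hadj).2 ⟨hpath, hedge⟩, ?_⟩
  intro x
  rw [Walk.support_cons, List.mem_cons]
  right
  have hx : (x : ℕ) ∈ List.range' a (k+1+2) := by
    rw [List.mem_range'_1]
    obtain ⟨h1, h2⟩ := x.2
    omega
  have := (hperm.mem_iff).2 hx
  obtain ⟨y, hy, hyx⟩ := List.mem_map.1 this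
  rwa [show x = y from Subtype.ext hyx.symm]

end Ham

theorem stmt4 :
    ∃ (V : Type) (H : SimpleGraph V),
      Infinite V ∧
      H.Connected ∧
      (∀ v : V, (H.neighborSet v).Finite) ∧
      (∃ e, H.end = {e}) ∧
      ∀ (x : V) (r : ℕ), 1 ≤ r → (H.ballGraph x r).IsHamiltonianGraph := by
  refine ⟨ℕ, GG, inferInstance, GG_connected, GG_locfin, GG_end_unique, ?_⟩
  intro x r hr
  show (GG.induce (GG.ballSet x r)).IsHamiltonianGraph
  rw [GG_ballSet_eq]
  exact hamIcc _ _ (by omega)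
end

section
/- Let G be a locally finite graph and let r ≥ 1 and k ≥ 2 be integers. If for every vertex x of G the ball G_r(x) is k-connected, then for every vertex x of G the ball G_{r+1}(x) is k-connected. -/
open SimpleGraph

namespace SimpleGraph
variable {V : Type*} (G : SimpleGraph V)

lemma mem_ballSet_self (u : V) (r : ℕ) : u ∈ G.ballSet u r :=
  ⟨Walk.nil, by simp⟩

lemma ballSet_mono {u : V} {r s : ℕ} (h : r ≤ s) : G.ballSet u r ⊆ G.ballSet u s :=
  fun _ ⟨p, hp⟩ => ⟨p, hp.trans h⟩

lemma adj_mem_ballSet {u v : V} (h : G.Adj u v) {r : ℕ} (hr : 1 ≤ r) :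
    v ∈ G.ballSet u r := ⟨h.toWalk, by simpa using hr⟩

lemma ballSet_adj_subset {x w : V} (h : G.Adj x w) (r : ℕ) :
    G.ballSet w r ⊆ G.ballSet x (r + 1) :=
  fun _ ⟨p, hp⟩ => ⟨Walk.cons h p, by simpa using hp⟩

end SimpleGraph

lemma reach_aux {V : Type*} {G : SimpleGraph V} {x w : V} {r : ℕ} (hr : 1 ≤ r)
    (S' : Set V) (hxw : G.Adj x w)
    {c d : ↥((Subtype.val ⁻¹' (S' \ {x}) : Set ↥(G.ballSet w r))ᶜ)}
    (p : ((G.ballGraph w r).induce ((Subtype.val ⁻¹' (S' \ {x}) : Set ↥(G.ballSet w r))ᶜ)).Walk c d) :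
    d.1.1 = x → c.1.1 ∉ S' →
    ∃ (a : V) (ha : a ∈ G.ballSet x (r+1) \ S') (hc : c.1.1 ∈ G.ballSet x (r+1) \ S'),
      a ∈ G.ballSet x r ∧
      (G.induce (G.ballSet x (r+1) \ S')).Reachable ⟨c.1.1, hc⟩ ⟨a, ha⟩ := by
  induction p with
  | @nil c0 =>
    intro hd hc
    have hcU : c0.1.1 ∈ G.ballSet x (r+1) \ S' :=
      ⟨G.ballSet_adj_subset hxw r c0.1.2, hc⟩
    exact ⟨c0.1.1, hcU, hcU, by rw [hd]; exact G.mem_ballSet_self x r, Reachable.refl _⟩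
  | @cons c' e d' hadj q ih =>
    intro hd hc
    by_cases hcr : c'.1.1 ∈ G.ballSet x r
    · have hcU : c'.1.1 ∈ G.ballSet x (r+1) \ S' :=
        ⟨G.ballSet_adj_subset hxw r c'.1.2, hc⟩
      exact ⟨c'.1.1, hcU, hcU, hcr, Reachable.refl _⟩
    · have hGadj : G.Adj c'.1.1 e.1.1 := hadj
      have heS : e.1.1 ∉ S' := by
        intro hmem
        have hex : e.1.1 = x := by
          by_contra hne
          exact e.2 ⟨hmem, hne⟩
        exact hcr (G.adj_mem_ballSet (hex ▸ hGadj).symm hr)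
      obtain ⟨a, ha, hce, har, hre⟩ := ih hd heS
      have hcU : c'.1.1 ∈ G.ballSet x (r+1) \ S' :=
        ⟨G.ballSet_adj_subset hxw r c'.1.2, hc⟩
      refine ⟨a, ha, hcU, har, ?_⟩
      have hadjU : (G.induce (G.ballSet x (r+1) \ S')).Adj ⟨c'.1.1, hcU⟩ ⟨e.1.1, hce⟩ := hGadj
      exact hadjU.reachable.trans hre

theorem stmt5 {V : Type*} (G : SimpleGraph V)
    (hlf : ∀ v : V, (G.neighborSet v).Finite)
    (r k : ℕ) (hr : 1 ≤ r) (hk : 2 ≤ k)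
    (h : ∀ x : V, (G.ballGraph x r).KConn k) :
    ∀ x : V, (G.ballGraph x (r + 1)).KConn k := by
  intro x S hSfin hScard
  classical
  set S' : Set V := Subtype.val '' S with hS'def
  have hS'fin : S'.Finite := hSfin.image _
  have hS'card : S'.ncard < k := by
    rw [hS'def, Set.ncard_image_of_injective _ Subtype.coe_injective]; exact hScard
  have hmemS : ∀ v : ↥(G.ballSet x (r+1)), v ∈ S ↔ (v : V) ∈ S' := by
    intro v
    constructor
    · exact fun hv => ⟨v, hv, rfl⟩
    · rintro ⟨u, hu, huv⟩
      rwa [show u = v from Subtype.ext huv] at hu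
  have hball := h x (Subtype.val ⁻¹' S') (hS'fin.preimage Subtype.coe_injective.injOn)
    (by
      refine lt_of_le_of_lt ?_ hS'card
      calc (Subtype.val ⁻¹' S' : Set ↥(G.ballSet x r)).ncard
          = (Subtype.val '' (Subtype.val ⁻¹' S' : Set ↥(G.ballSet x r))).ncard :=
            (Set.ncard_image_of_injective _ Subtype.coe_injective).symm
        _ ≤ S'.ncard := Set.ncard_le_ncard (Set.image_preimage_subset _ _) hS'fin)
  obtain ⟨hnt0, hconn0⟩ := hball
  constructor
  · -- Sᶜ is nontrivial
    obtain ⟨a, ha, b, hb, hab⟩ := hnt0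
    refine ⟨⟨a.1, G.ballSet_mono (by omega) a.2⟩, ?_, ⟨b.1, G.ballSet_mono (by omega) b.2⟩, ?_, ?_⟩
    · intro hmem; exact ha ((hmemS _).mp hmem)
    · intro hmem; exact hb ((hmemS _).mp hmem)
    · intro he
      have hval : (a : V) = b := by simpa using he
      exact hab (Subtype.ext hval)
  · -- connectivity
    have hUconn : (G.induce (G.ballSet x (r+1) \ S')).Connected := by
      have key : ∀ v : ↥(G.ballSet x (r+1) \ S'), ∃ (a : V) (ha : a ∈ G.ballSet x (r+1) \ S'),
          a ∈ G.ballSet x r ∧ (G.induce (G.ballSet x (r+1) \ S')).Reachable v ⟨a, ha⟩ := by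
        rintro ⟨u, huB, huS⟩
        by_cases hur : u ∈ G.ballSet x r
        · exact ⟨u, ⟨huB, huS⟩, hur, Reachable.refl _⟩
        · obtain ⟨p, hp⟩ := huB
          cases p with
          | nil => exact absurd (G.mem_ballSet_self x r) hur
          | @cons _ w' _ hadj q =>
            have hq : q.length ≤ r := by
              simp only [Walk.length_cons] at hp; omega
            obtain ⟨-, hconnw⟩ := h w' (Subtype.val ⁻¹' (S' \ {x}))
              ((hS'fin.diff).preimage Subtype.coe_injective.injOn)
              (by
                refine lt_of_le_of_lt ?_ hS'card
                calc (Subtype.val ⁻¹' (S' \ {x}) : Set ↥(G.ballSet w' r)).ncard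
                    = (Subtype.val '' (Subtype.val ⁻¹' (S' \ {x}) : Set ↥(G.ballSet w' r))).ncard :=
                      (Set.ncard_image_of_injective _ Subtype.coe_injective).symm
                  _ ≤ (S' \ {x}).ncard := Set.ncard_le_ncard (Set.image_preimage_subset _ _)
                      (hS'fin.diff)
                  _ ≤ S'.ncard := Set.ncard_le_ncard Set.diff_subset hS'fin)
            have hu' : u ∈ G.ballSet w' r := ⟨q, hq⟩
            have hx' : x ∈ G.ballSet w' r := G.adj_mem_ballSet hadj.symm hr
            obtain ⟨P⟩ := hconnw.preconnected
              ⟨⟨u, hu'⟩, fun hm => huS hm.1⟩ ⟨⟨x, hx'⟩, fun hm => hm.2 rfl⟩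
            obtain ⟨a, ha, hc, har, hreach⟩ := reach_aux hr S' hadj P rfl huS
            exact ⟨a, ha, har, hreach⟩
      have Aconn : ∀ (a b : V) (ha : a ∈ G.ballSet x (r+1) \ S')
          (hb : b ∈ G.ballSet x (r+1) \ S'), a ∈ G.ballSet x r → b ∈ G.ballSet x r →
          (G.induce (G.ballSet x (r+1) \ S')).Reachable ⟨a, ha⟩ ⟨b, hb⟩ := by
        intro a b ha hb har hbr
        have h1 := hconn0.preconnected ⟨⟨a, har⟩, ha.2⟩ ⟨⟨b, hbr⟩, hb.2⟩
        let f : ((G.ballGraph x r).induce (Subtype.val ⁻¹' S')ᶜ) →g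
            (G.induce (G.ballSet x (r+1) \ S')) :=
          ⟨fun v => ⟨v.1.1, G.ballSet_mono (by omega) v.1.2, v.2⟩, fun hadj => hadj⟩
        exact h1.map f
      obtain ⟨a0, ha0, -⟩ := hnt0
      have ha0U : (a0 : V) ∈ G.ballSet x (r+1) \ S' :=
        ⟨G.ballSet_mono (by omega) a0.2, ha0⟩
      have hne : Nonempty ↥(G.ballSet x (r+1) \ S') := ⟨⟨a0.1, ha0U⟩⟩
      refine SimpleGraph.Connected.mk ?_
      intro u v
      obtain ⟨au, hau, haur, hu⟩ := key u
      obtain ⟨av, hav, havr, hv⟩ := key v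
      exact (hu.trans (Aconn au av hau hav haur havr)).trans hv.symm
    -- transfer to the goal graph
    let f2 : (G.induce (G.ballSet x (r+1) \ S')) →g ((G.ballGraph x (r+1)).induce Sᶜ) :=
      ⟨fun v => ⟨⟨v.1, v.2.1⟩, fun hm => v.2.2 ((hmemS _).mp hm)⟩, fun hadj => hadj⟩
    have hsurj : Function.Surjective f2 := by
      rintro ⟨⟨v, hv⟩, hs⟩
      exact ⟨⟨v, hv, fun hv' => hs ((hmemS _).mpr hv')⟩, rfl⟩
    exact hUconn.map f2 hsurj
end

section
/- Let G be a locally finite graph and let r ≥ 1 and k ≥ 2 be integers. If for every vertex x of G the ball G_r(x) is k-connected, then for every integer s > r and every vertex x of G the ball G_s(x) is k-connected. -/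
open SimpleGraph

private lemma bs_self {V : Type*} (G : SimpleGraph V) (u : V) (r : ℕ) : u ∈ G.ballSet u r :=
  ⟨.nil, by simp⟩

private lemma bs_adj {V : Type*} {G : SimpleGraph V} {u v : V} {r : ℕ}
    (h : G.Adj u v) (hr : 1 ≤ r) : v ∈ G.ballSet u r :=
  ⟨.cons h .nil, by simpa using hr⟩

private lemma bs_mono {V : Type*} {G : SimpleGraph V} {u : V} {r s : ℕ} (h : r ≤ s) :
    G.ballSet u r ⊆ G.ballSet u s := fun _ ⟨p, hp⟩ => ⟨p, le_trans hp h⟩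

private lemma bs_subset {V : Type*} {G : SimpleGraph V} {x y : V} {r s : ℕ}
    (p : G.Walk x y) (h : p.length + r ≤ s) : G.ballSet y r ⊆ G.ballSet x s :=
  fun _ ⟨q, hq⟩ => ⟨p.append q, by rw [Walk.length_append]; omega⟩

private lemma walk_of_induce {V : Type*} {G : SimpleGraph V} {A S' : Set V}
    {a b : V} (ha : a ∈ A) (hb : b ∈ A) (ha' : a ∉ S') (hb' : b ∉ S')
    (hc : ((G.induce A).induce {z : ↥A | z.1 ∈ S'}ᶜ).Connected) :
    ∃ p : G.Walk a b, ∀ w ∈ p.support, w ∈ A ∧ w ∉ S' := by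
  obtain ⟨q⟩ := hc.preconnected ⟨⟨a, ha⟩, ha'⟩ ⟨⟨b, hb⟩, hb'⟩
  refine ⟨q.map ⟨fun z => z.1.1, fun h => h⟩, ?_⟩
  intro w hw
  rw [Walk.support_map, List.mem_map] at hw
  obtain ⟨z, hz, rfl⟩ := hw
  exact ⟨z.1.2, z.2⟩

private lemma walk_to_induce {V : Type*} {G : SimpleGraph V} {A : Set V} :
    ∀ {u v : V} (p : G.Walk u v), (∀ w ∈ p.support, w ∈ A) → ∀ (hu : u ∈ A) (hv : v ∈ A),
    ∃ q : (G.induce A).Walk ⟨u, hu⟩ ⟨v, hv⟩, ∀ z ∈ q.support, z.1 ∈ p.support := by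
  intro u v p
  induction p with
  | nil =>
    intro _ hu hv
    exact ⟨.nil, by simp⟩
  | cons h p ih =>
    rename_i u' w' v'
    intro hp hu hv
    have hw : w' ∈ A := hp w' (by simp)
    obtain ⟨q, hq⟩ := ih (fun z hz => hp z (by simp [hz])) hw hv
    refine ⟨.cons (show (G.induce A).Adj ⟨u', hu⟩ ⟨w', hw⟩ from h) q, ?_⟩
    intro z hz
    rw [Walk.support_cons, List.mem_cons] at hz
    rcases hz with rfl | hz
    · exact Walk.start_mem_support _
    · rw [Walk.support_cons, List.mem_cons]
      exact Or.inr (hq z hz)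

private lemma chain_lemma {V : Type*} {G : SimpleGraph V} {r s : ℕ} {S₀ : Set V}
    (ballReach : ∀ y a b, a ∈ G.ballSet y r → b ∈ G.ballSet y r → a ∉ S₀ → b ∉ S₀ →
      ∃ p : G.Walk a b, ∀ w ∈ p.support, w ∈ G.ballSet y r ∧ w ∉ S₀)
    (glue : ∀ y y', G.Adj y y' → ∃ c, c ∉ S₀ ∧ c ∈ G.ballSet y r ∧ c ∈ G.ballSet y' r) :
    ∀ {y x : V} (p : G.Walk y x), p.length + r ≤ s →
      ∀ a, a ∈ G.ballSet y r → a ∉ S₀ →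
      ∃ b, (b ∈ G.ballSet x r ∧ b ∉ S₀) ∧
        ∃ q : G.Walk a b, ∀ w ∈ q.support, w ∈ G.ballSet x s ∧ w ∉ S₀ := by
  intro y x p
  induction p with
  | nil =>
    intro hp a ha ha'
    refine ⟨a, ⟨ha, ha'⟩, .nil, ?_⟩
    intro w hw
    rw [Walk.support_nil, List.mem_singleton] at hw
    subst hw
    exact ⟨bs_mono (by simpa using hp) ha, ha'⟩
  | cons hadj q ih =>
    rename_i y₀ y₁ x₀
    intro hp a ha ha'
    rw [Walk.length_cons] at hp
    obtain ⟨c, hcS, hcy, hcy₁⟩ := glue _ _ hadj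
    have hsub1 : G.ballSet y₀ r ⊆ G.ballSet x₀ s :=
      bs_subset (Walk.cons hadj q).reverse (by rw [Walk.length_reverse, Walk.length_cons]; omega)
    obtain ⟨p₁, hp₁⟩ := ballReach y₀ a c ha hcy ha' hcS
    obtain ⟨b, hb, p₂, hp₂⟩ := ih (by omega) c hcy₁ hcS
    refine ⟨b, hb, p₁.append p₂, ?_⟩
    intro w hw
    rw [Walk.mem_support_append_iff] at hw
    rcases hw with hw | hw
    · exact ⟨hsub1 (hp₁ w hw).1, (hp₁ w hw).2⟩
    · exact hp₂ w hw

private lemma descend_lemma {V : Type*} {G : SimpleGraph V} {r s : ℕ} {S₀ : Set V}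
    (hrs : r ≤ s)
    (ballReach : ∀ y a b, a ∈ G.ballSet y r → b ∈ G.ballSet y r → a ∉ S₀ → b ∉ S₀ →
      ∃ p : G.Walk a b, ∀ w ∈ p.support, w ∈ G.ballSet y r ∧ w ∉ S₀)
    (glue : ∀ y y', G.Adj y y' → ∃ c, c ∉ S₀ ∧ c ∈ G.ballSet y r ∧ c ∈ G.ballSet y' r) :
    ∀ {y x : V} (p : G.Walk y x) (j : ℕ), j + p.length ≤ s → j ≤ r →
      ∀ a, a ∈ G.ballSet y j → a ∉ S₀ →
      ∃ b, (b ∈ G.ballSet x r ∧ b ∉ S₀) ∧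
        ∃ q : G.Walk a b, ∀ w ∈ q.support, w ∈ G.ballSet x s ∧ w ∉ S₀ := by
  intro y x p
  induction p with
  | nil =>
    intro j hj hjr a ha ha'
    refine ⟨a, ⟨bs_mono hjr ha, ha'⟩, .nil, ?_⟩
    intro w hw
    rw [Walk.support_nil, List.mem_singleton] at hw
    subst hw
    exact ⟨bs_mono (le_trans hjr hrs) ha, ha'⟩
  | cons hadj q ih =>
    rename_i y₀ y₁ x₀
    intro j hj hjr a ha ha'
    rw [Walk.length_cons] at hj
    by_cases hj1 : j + 1 ≤ r
    · have ha1 : a ∈ G.ballSet y₁ (j + 1) := by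
        obtain ⟨pa, hpa⟩ := ha
        exact ⟨.cons hadj.symm pa, by rw [Walk.length_cons]; omega⟩
      exact ih (j + 1) (by omega) hj1 a ha1 ha'
    · have hjr' : j = r := by omega
      subst hjr'
      exact chain_lemma ballReach glue (.cons hadj q)
        (by rw [Walk.length_cons]; omega) a ha ha'

theorem stmt6 {V : Type*} (G : SimpleGraph V)
    (hlf : ∀ v : V, (G.neighborSet v).Finite)
    (r k : ℕ) (hr : 1 ≤ r) (hk : 2 ≤ k)
    (h : ∀ x : V, (G.ballGraph x r).KConn k) :
    ∀ s : ℕ, r < s → ∀ x : V, (G.ballGraph x s).KConn k := by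
  intro s hs x S hSfin hScard
  classical
  have hrs : r ≤ s := le_of_lt hs
  set S₀ : Set V := Subtype.val '' S with hS₀def
  have hS₀fin : S₀.Finite := hSfin.image _
  have hS₀card : S₀.ncard < k := by
    rwa [hS₀def, Set.ncard_image_of_injective _ Subtype.val_injective]
  -- pullback facts
  have pull : ∀ (y : V) (S' : Set V), S' ⊆ S₀ →
      ({z : ↥(G.ballSet y r) | z.1 ∈ S'}).Finite ∧
      ({z : ↥(G.ballSet y r) | z.1 ∈ S'}).ncard < k := by
    intro y S' hsub
    have h1 : {z : ↥(G.ballSet y r) | z.1 ∈ S'} = Subtype.val ⁻¹' S' := rfl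
    have hfin : ({z : ↥(G.ballSet y r) | z.1 ∈ S'}).Finite := by
      rw [h1]; exact (hS₀fin.subset hsub).preimage Subtype.val_injective.injOn
    refine ⟨hfin, ?_⟩
    have h2 : (Subtype.val '' {z : ↥(G.ballSet y r) | z.1 ∈ S'}).ncard
        = ({z : ↥(G.ballSet y r) | z.1 ∈ S'}).ncard :=
      Set.ncard_image_of_injective _ Subtype.val_injective
    have h3 : Subtype.val '' {z : ↥(G.ballSet y r) | z.1 ∈ S'} ⊆ S₀ := by
      rintro w ⟨z, hz, rfl⟩; exact hsub hz
    calc ({z : ↥(G.ballSet y r) | z.1 ∈ S'}).ncard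
        = (Subtype.val '' {z : ↥(G.ballSet y r) | z.1 ∈ S'}).ncard := h2.symm
      _ ≤ S₀.ncard := Set.ncard_le_ncard h3 hS₀fin
      _ < k := hS₀card
  -- connectivity within each r-ball, avoiding S' ⊆ S₀
  have ballReach' : ∀ (y : V) (S' : Set V), S' ⊆ S₀ →
      ∀ a b, a ∈ G.ballSet y r → b ∈ G.ballSet y r → a ∉ S' → b ∉ S' →
      ∃ p : G.Walk a b, ∀ w ∈ p.support, w ∈ G.ballSet y r ∧ w ∉ S' := by
    intro y S' hsub a b ha hb ha' hb'
    obtain ⟨hfin, hcard⟩ := pull y S' hsub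
    obtain ⟨_, hconn⟩ := h y _ hfin hcard
    exact walk_of_induce ha hb ha' hb' hconn
  have ballReach := fun y => ballReach' y S₀ subset_rfl
  -- nontriviality of each r-ball minus S'
  have ballNontriv : ∀ (y : V) (S' : Set V), S' ⊆ S₀ →
      ∃ a b : V, (a ∈ G.ballSet y r ∧ a ∉ S') ∧ (b ∈ G.ballSet y r ∧ b ∉ S') ∧ a ≠ b := by
    intro y S' hsub
    obtain ⟨hfin, hcard⟩ := pull y S' hsub
    obtain ⟨hnt, _⟩ := h y _ hfin hcard
    obtain ⟨c, hc, d, hd, hcd⟩ := hnt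
    exact ⟨c.1, d.1, ⟨c.2, hc⟩, ⟨d.2, hd⟩, fun e => hcd (Subtype.ext e)⟩
  -- gluing adjacent balls
  have glue : ∀ y y' : V, G.Adj y y' → ∃ c, c ∉ S₀ ∧ c ∈ G.ballSet y r ∧ c ∈ G.ballSet y' r := by
    intro y y' hadj
    have hsub : S₀ \ {y'} ⊆ S₀ := Set.diff_subset
    obtain ⟨hfin, hcard⟩ := pull y (S₀ \ {y'}) hsub
    obtain ⟨hnt, hconn⟩ := h y _ hfin hcard
    have hy'b : y' ∈ G.ballSet y r := bs_adj hadj hr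
    have hy'S : (⟨y', hy'b⟩ : ↥(G.ballSet y r)) ∈ {z : ↥(G.ballSet y r) | z.1 ∈ S₀ \ {y'}}ᶜ :=
      fun hm => hm.2 rfl
    obtain ⟨c0, hc0, d0, hd0, hcd⟩ := hnt
    have hex : ∃ w : ↥(G.ballSet y r),
        w ∈ {z : ↥(G.ballSet y r) | z.1 ∈ S₀ \ {y'}}ᶜ ∧ w ≠ ⟨y', hy'b⟩ := by
      by_cases hc : c0 = ⟨y', hy'b⟩
      · exact ⟨d0, hd0, fun e => hcd (hc.trans e.symm)⟩
      · exact ⟨c0, hc0, hc⟩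
    obtain ⟨w, hwS, hwne⟩ := hex
    obtain ⟨q⟩ := hconn.preconnected ⟨⟨y', hy'b⟩, hy'S⟩ ⟨w, hwS⟩
    have hne2 : (⟨⟨y', hy'b⟩, hy'S⟩ :
        ↥({z : ↥(G.ballSet y r) | z.1 ∈ S₀ \ {y'}}ᶜ)) ≠ ⟨w, hwS⟩ :=
      fun e => hwne (congrArg Subtype.val e).symm
    cases q with
    | nil => exact absurd rfl hne2
    | cons hadj2 q' =>
      rename_i z
      have hGadj : G.Adj y' z.1.1 := hadj2
      have hzne : z.1.1 ≠ y' := hGadj.ne'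
      have hzS : z.1.1 ∉ S₀ := fun hm => z.2 ⟨hm, hzne⟩
      exact ⟨z.1.1, hzS, z.1.2, bs_adj hGadj hr⟩
  -- membership transfer
  have memS₀ : ∀ (a : V) (haB : a ∈ G.ballSet x s),
      a ∈ S₀ ↔ (⟨a, haB⟩ : ↥(G.ballSet x s)) ∈ S := by
    intro a haB
    constructor
    · rintro ⟨c, hc, hca⟩
      have : c = ⟨a, haB⟩ := Subtype.ext hca
      rwa [this] at hc
    · intro hm; exact ⟨_, hm, rfl⟩
  obtain ⟨a0, b0, ⟨ha0r, ha0S⟩, ⟨hb0r, hb0S⟩, hab0⟩ := ballNontriv x S₀ subset_rfl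
  have ha0B : a0 ∈ G.ballSet x s := bs_mono hrs ha0r
  have hb0B : b0 ∈ G.ballSet x s := bs_mono hrs hb0r
  have ha0c : (⟨a0, ha0B⟩ : ↥(G.ballSet x s)) ∈ Sᶜ :=
    fun hm => ha0S ((memS₀ a0 ha0B).mpr hm)
  have hb0c : (⟨b0, hb0B⟩ : ↥(G.ballSet x s)) ∈ Sᶜ :=
    fun hm => hb0S ((memS₀ b0 hb0B).mpr hm)
  constructor
  · -- Nontriviality
    exact ⟨⟨a0, ha0B⟩, ha0c, ⟨b0, hb0B⟩, hb0c, fun e => hab0 (congrArg Subtype.val e)⟩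
  · -- Connectivity
    rw [connected_iff]
    have key : ∀ (u : ↥(G.ballSet x s)), u ∉ S →
        ∃ b, (b ∈ G.ballSet x r ∧ b ∉ S₀) ∧
          ∃ q : G.Walk u.1 b, ∀ w ∈ q.support, w ∈ G.ballSet x s ∧ w ∉ S₀ := by
      rintro ⟨u, huB⟩ huS
      have hu₀ : u ∉ S₀ := fun hm => huS ((memS₀ u huB).mp hm)
      obtain ⟨p, hp⟩ := huB
      exact descend_lemma hrs ballReach glue p.reverse 0
        (by rw [Walk.length_reverse]; omega) (by omega) u (bs_self G u 0) hu₀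
    refine ⟨?_, ⟨⟨⟨a0, ha0B⟩, ha0c⟩⟩⟩
    rintro ⟨⟨a, haB⟩, haS⟩ ⟨⟨b, hbB⟩, hbS⟩
    obtain ⟨b₁, ⟨hb₁r, hb₁S⟩, qa, hqa⟩ := key ⟨a, haB⟩ haS
    obtain ⟨b₂, ⟨hb₂r, hb₂S⟩, qb, hqb⟩ := key ⟨b, hbB⟩ hbS
    obtain ⟨qm, hqm⟩ := ballReach x b₁ b₂ hb₁r hb₂r hb₁S hb₂S
    -- total walk a → b in G with support in ballSet x s minus S₀
    set W : G.Walk a b := (qa.append qm).append qb.reverse with hW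
    have hWsupp : ∀ w ∈ W.support, w ∈ G.ballSet x s ∧ w ∉ S₀ := by
      intro w hw
      rw [hW, Walk.mem_support_append_iff, Walk.mem_support_append_iff] at hw
      rcases hw with (hw | hw) | hw
      · exact hqa w hw
      · exact ⟨bs_mono hrs (hqm w hw).1, (hqm w hw).2⟩
      · rw [Walk.support_reverse, List.mem_reverse] at hw
        exact hqb w hw
    obtain ⟨q1, hq1⟩ := walk_to_induce W (fun w hw => (hWsupp w hw).1) haB hbB
    have hq1S : ∀ z ∈ q1.support, z ∈ (Sᶜ : Set ↥(G.ballSet x s)) := by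
      intro z hz
      have : z.1 ∉ S₀ := (hWsupp z.1 (hq1 z hz)).2
      intro hm
      exact this ⟨z, hm, rfl⟩
    obtain ⟨q2, _⟩ := walk_to_induce (A := (Sᶜ : Set ↥(G.ballSet x s))) q1 hq1S haS hbS
    exact ⟨q2⟩
end

section
/- Let r ≥ 1 be an integer and let G be a connected, infinite, locally finite graph such that for every vertex u of G, the ball G_r(u) is α(G_{r+1}(u))-connected, where α(G_{r+1}(u)) is the independence number of the ball G_{r+1}(u). Then for every finite set S of vertices of G there exists a cycle in G containing all vertices of S. -/
open SimpleGraph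

namespace KLT

open SimpleGraph Walk

variable {V : Type*} {G : SimpleGraph V}




/-! ### Ball basics -/

lemma mem_ballSet_self (u : V) (n : ℕ) : u ∈ G.ballSet u n := ⟨Walk.nil, by simp⟩

lemma ballSet_mono (u : V) {m n : ℕ} (h : m ≤ n) : G.ballSet u m ⊆ G.ballSet u n := by
  rintro v ⟨p, hp⟩; exact ⟨p, hp.trans h⟩

lemma mem_ballSet_of_adj {u a : V} (h : G.Adj u a) {n : ℕ} (hn : 1 ≤ n) :
    a ∈ G.ballSet u n := ⟨Walk.cons h Walk.nil, by simpa using hn⟩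

lemma mem_ballSet_step {u w z : V} {n : ℕ} (hw : w ∈ G.ballSet u n) (h : G.Adj w z) :
    z ∈ G.ballSet u (n + 1) := by
  obtain ⟨p, hp⟩ := hw
  exact ⟨p.concat h, by rw [Walk.length_concat]; omega⟩

/-- decompose a walk of positive length at its last edge -/
lemma exists_last_edge {u v : V} (p : G.Walk u v) (hp : 1 ≤ p.length) :
    ∃ (w : V) (h : G.Adj v w) (q : G.Walk w u), q.length + 1 = p.length := by
  have hnil : ¬ p.reverse.Nil := by
    rw [Walk.nil_iff_length_eq, Walk.length_reverse]; omega
  obtain ⟨w, h, q, hq⟩ := Walk.not_nil_iff.mp hnil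
  refine ⟨w, h, q, ?_⟩
  have := congrArg Walk.length hq
  rw [Walk.length_reverse, Walk.length_cons] at this
  omega

lemma ballSet_finite (hlf : ∀ v : V, (G.neighborSet v).Finite) (u : V) (n : ℕ) :
    (G.ballSet u n).Finite := by
  induction n with
  | zero =>
    apply Set.Finite.subset (Set.finite_singleton u)
    rintro v ⟨p, hp⟩
    have : u = v := Walk.eq_of_length_eq_zero (Nat.le_zero.mp hp)
    simp [this.symm]
  | succ n ih =>
    apply Set.Finite.subset (ih.union (ih.biUnion (fun w _ => hlf w)))
    rintro v ⟨p, hp⟩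
    rcases Nat.lt_or_ge p.length (n + 1) with hl | hl
    · exact Or.inl ⟨p, by omega⟩
    · have h1 : 1 ≤ p.length := by omega
      obtain ⟨w, h, q, hq⟩ := exists_last_edge p h1
      exact Or.inr (Set.mem_biUnion ⟨q.reverse, by rw [Walk.length_reverse]; omega⟩ h.symm)

/-- if the ball stops growing, it contains everything (for a connected graph) -/
lemma ballSet_stable {u : V} {n : ℕ} (hstab : G.ballSet u (n + 1) ⊆ G.ballSet u n)
    (hconn : G.Connected) : ∀ v : V, v ∈ G.ballSet u n := by
  have step : ∀ m, G.ballSet u m ⊆ G.ballSet u n := by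
    intro m
    induction m with
    | zero => exact ballSet_mono u (Nat.zero_le n)
    | succ m ihm =>
      rintro v ⟨p, hp⟩
      rcases Nat.lt_or_ge p.length (m + 1) with hl | hl
      · exact ihm ⟨p, by omega⟩
      · have h1 : 1 ≤ p.length := by omega
        obtain ⟨w, h, q, hq⟩ := exists_last_edge p h1
        have hw : w ∈ G.ballSet u n := ihm ⟨q.reverse, by rw [Walk.length_reverse]; omega⟩
        exact hstab (mem_ballSet_step hw h.symm)
  intro v
  obtain ⟨p⟩ := hconn.preconnected u v
  exact step p.length ⟨p, le_rfl⟩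

/-! ### indepNum -/

lemma le_indepNum {W : Type*} [Finite W] {H : SimpleGraph W} (s : Finset W)
    (hs : ∀ x ∈ s, ∀ y ∈ s, x ≠ y → ¬ H.Adj x y) : s.card ≤ H.indepNumSup := by
  have : Fintype W := Fintype.ofFinite W
  apply le_csSup
  · refine ⟨Fintype.card W, ?_⟩
    rintro n ⟨t, ht, -⟩
    exact ht ▸ t.card_le_univ
  · exact ⟨s, rfl, hs⟩

/-! ### walks in induced subgraphs -/

/-- map a walk in an induced subgraph to the ambient graph -/
lemma induce_walk_exists {s : Set V} {a b : ↥s} (p : (G.induce s).Walk a b) :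
    ∃ q : G.Walk a b, q.support = p.support.map Subtype.val :=
  ⟨p.map (Embedding.induce s).toHom, Walk.support_map _ _⟩



lemma ballGraph_adj {u : V} {n : ℕ} {a b : ↥(G.ballSet u n)} :
    (G.ballGraph u n).Adj a b ↔ G.Adj ↑a ↑b := Iff.rfl

lemma induce_ballGraph_adj {u : V} {n : ℕ} {s : Set ↥(G.ballSet u n)}
    {a b : ↥s} : ((G.ballGraph u n).induce s).Adj a b ↔ G.Adj ↑↑a ↑↑b := Iff.rfl

/-! ### consequences of the connectivity hypothesis -/

lemma two_le_indep (hconn : G.Connected) (hinf : Infinite V)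
    (hlf : ∀ v : V, (G.neighborSet v).Finite) (x : V) {n : ℕ} (hn : 2 ≤ n) :
    2 ≤ (G.ballGraph x n).indepNumSup := by
  have : Finite ↥(G.ballSet x n) := (ballSet_finite hlf x n).to_subtype
  -- find w at distance exactly 2
  have hex : ∃ w, w ∈ G.ballSet x 2 ∧ w ∉ G.ballSet x 1 := by
    by_contra hcon
    push_neg at hcon
    have hstab : G.ballSet x 2 ⊆ G.ballSet x 1 := fun w hw => hcon w hw
    have hall := ballSet_stable (u := x) (n := 1) hstab hconn
    have : (Set.univ : Set V).Finite :=
      (ballSet_finite hlf x 1).subset (fun v _ => hall v)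
    exact Set.infinite_univ this
  obtain ⟨w, hw2, hw1⟩ := hex
  have hxw : x ≠ w := fun h => hw1 (h ▸ mem_ballSet_self x 1)
  have hnadj : ¬ G.Adj x w := fun h => hw1 (mem_ballSet_of_adj h le_rfl)
  have hxmem : x ∈ G.ballSet x n := mem_ballSet_self x n
  have hwmem : w ∈ G.ballSet x n := ballSet_mono x hn hw2
  classical
  have hcard : ({⟨x, hxmem⟩, ⟨w, hwmem⟩} : Finset ↥(G.ballSet x n)).card = 2 := by
    rw [Finset.card_pair]
    exact fun h => hxw (congrArg Subtype.val h)
  calc 2 = _ := hcard.symm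
    _ ≤ _ := le_indepNum _ (by
      intro a ha b hb hne hadj
      simp only [Finset.mem_insert, Finset.mem_singleton] at ha hb
      rw [ballGraph_adj] at hadj
      rcases ha with rfl | rfl <;> rcases hb with rfl | rfl <;>
        simp_all <;> exact hnadj hadj.symm)

lemma exists_two_neighbors {x : V} {r : ℕ} (hr1 : 1 ≤ r)
    (hk : 2 ≤ (G.ballGraph x (r+1)).indepNumSup)
    (hlf : ∀ v : V, (G.neighborSet v).Finite)
    (h : (G.ballGraph x r).KConn ((G.ballGraph x (r + 1)).indepNumSup)) :
    ∃ a b : V, a ≠ b ∧ G.Adj x a ∧ G.Adj x b := by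
  have hfin : Finite ↥(G.ballSet x r) := (ballSet_finite hlf x r).to_subtype
  set S : Set ↥(G.ballSet x r) := {z | G.Adj x ↑z} with hS
  by_cases hsub : S.Subsingleton
  · exfalso
    have hncard : S.ncard < (G.ballGraph x (r+1)).indepNumSup := by
      have h1 : S.ncard ≤ 1 := (Set.ncard_le_one (Set.toFinite S)).mpr
        (fun a ha b hb => hsub ha hb)
      omega
    obtain ⟨hnt, hcon⟩ := h S (Set.toFinite S) hncard
    have hxS : (⟨x, mem_ballSet_self x r⟩ : ↥(G.ballSet x r)) ∈ Sᶜ := by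
      simp only [hS, Set.mem_compl_iff, Set.mem_setOf_eq]
      exact G.irrefl
    obtain ⟨p, hp, q, hq, hpq⟩ := hnt
    have hy : ∃ y, y ∈ Sᶜ ∧ y ≠ ⟨x, mem_ballSet_self x r⟩ := by
      by_cases hpx : p = ⟨x, mem_ballSet_self x r⟩
      · exact ⟨q, hq, fun hh => hpq (hh ▸ hpx ▸ rfl)⟩
      · exact ⟨p, hp, hpx⟩
    obtain ⟨y, hyS, hyx⟩ := hy
    obtain ⟨wk⟩ := hcon.preconnected ⟨_, hxS⟩ ⟨y, hyS⟩
    have hnil : ¬ wk.Nil := by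
      apply Walk.not_nil_of_ne
      intro hh
      exact hyx (congrArg Subtype.val hh).symm
    obtain ⟨z, hadj, q', -⟩ := Walk.not_nil_iff.mp hnil
    have : G.Adj x ↑↑z := hadj
    exact z.2 this
  · rw [Set.not_subsingleton_iff] at hsub
    obtain ⟨z₁, h₁, z₂, h₂, hne⟩ := hsub
    exact ⟨↑z₁, ↑z₂, fun hh => hne (Subtype.ext hh), h₁, h₂⟩

lemma exists_base_cycle {x : V} {r : ℕ} (hr1 : 1 ≤ r)
    (hk : 2 ≤ (G.ballGraph x (r+1)).indepNumSup)
    (hlf : ∀ v : V, (G.neighborSet v).Finite)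
    (h : (G.ballGraph x r).KConn ((G.ballGraph x (r + 1)).indepNumSup)) :
    ∃ c : G.Walk x x, c.IsCycle := by
  classical
  have hfin : Finite ↥(G.ballSet x r) := (ballSet_finite hlf x r).to_subtype
  obtain ⟨a, b, hab, ha, hb⟩ := exists_two_neighbors hr1 hk hlf h
  set S : Set ↥(G.ballSet x r) := {⟨x, mem_ballSet_self x r⟩} with hS
  have hncard : S.ncard < (G.ballGraph x (r+1)).indepNumSup := by
    rw [hS, Set.ncard_singleton]; omega
  obtain ⟨-, hcon⟩ := h S (Set.toFinite S) hncard
  have hmem : ∀ {c : V}, G.Adj x c → c ∈ G.ballSet x r := fun hc => mem_ballSet_of_adj hc hr1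
  have hbS : (⟨b, hmem hb⟩ : ↥(G.ballSet x r)) ∈ Sᶜ := by
    simp only [hS, Set.mem_compl_iff, Set.mem_singleton_iff]
    exact fun hh => hb.ne' (congrArg Subtype.val hh)
  have haS' : (⟨a, hmem ha⟩ : ↥(G.ballSet x r)) ∈ Sᶜ := by
    simp only [hS, Set.mem_compl_iff, Set.mem_singleton_iff]
    exact fun hh => ha.ne' (congrArg Subtype.val hh)
  obtain ⟨wk⟩ := hcon.preconnected ⟨_, haS'⟩ ⟨_, hbS⟩
  obtain ⟨q₁, hq₁⟩ := induce_walk_exists wk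
  obtain ⟨q₂, hq₂⟩ := induce_walk_exists q₁
  -- q₂ : G.Walk a b, support avoids x
  have hxq : x ∉ q₂.support := by
    rw [hq₂]; erw [hq₁]
    simp only [List.map_map, List.mem_map]
    rintro ⟨z, hz, hzx⟩
    have : (z : ↥(G.ballSet x r)) = ⟨x, mem_ballSet_self x r⟩ := Subtype.ext hzx
    exact z.2 this
  set P := q₂.toPath with hP
  have hxP : x ∉ (P : G.Walk a b).support := fun hh => hxq (q₂.support_toPath_subset hh)
  refine ⟨Walk.cons ha ((P : G.Walk a b).concat hb.symm), ?_⟩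
  rw [Walk.cons_isCycle_iff]
  constructor
  · rw [Walk.isPath_def, Walk.support_concat, ← List.concat_eq_append]
    refine List.Nodup.concat (by simpa using hxP) ?_
    rw [← Walk.isPath_def]; exact P.2
  · rw [Walk.edges_concat]
    intro hmem'
    rw [List.concat_eq_append, List.mem_append] at hmem'
    rcases hmem' with hmem' | hmem'
    · exact hxP (Walk.fst_mem_support_of_mem_edges _ hmem')
    · rw [List.mem_singleton] at hmem'
      have := Sym2.eq_iff.mp hmem'
      rcases this with ⟨h1, h2⟩ | ⟨h1, h2⟩
      · exact ha.ne' h2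
      · exact hab h2



/-! ### closed walk support facts -/

lemma support_tail_ne_nil {b : V} (p : G.Walk b b) (hnil : ¬ p.Nil) :
    p.support.tail ≠ [] := by
  intro hh
  have h1 : p.support = b :: p.support.tail := p.support_eq_cons
  rw [hh] at h1
  exact hnil (Walk.nil_iff_support_eq.mpr h1)

lemma getLast_support_tail {b : V} (p : G.Walk b b) (hnil : ¬ p.Nil) :
    p.support.tail.getLast (support_tail_ne_nil p hnil) = b := by
  rw [List.getLast_tail]
  exact p.getLast_support

lemma closed_mem_support_tail {b : V} {p : G.Walk b b} (hnil : ¬ p.Nil) {z : V} :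
    z ∈ p.support ↔ z ∈ p.support.tail := by
  constructor
  · intro hz
    rw [p.support_eq_cons, List.mem_cons] at hz
    rcases hz with rfl | hz
    · have h2 := List.getLast_mem (support_tail_ne_nil p hnil)
      rwa [getLast_support_tail p hnil] at h2
    · exact hz
  · intro hz
    rw [p.support_eq_cons]
    exact List.mem_cons_of_mem _ hz

lemma closed_mem_support_dropLast {b : V} {p : G.Walk b b} (hnil : ¬ p.Nil) {z : V}
    (hz : z ∈ p.support) : z ∈ p.support.dropLast := by
  have h1 : p.support = b :: p.support.tail := p.support_eq_cons
  have h2 : p.support.dropLast = b :: p.support.tail.dropLast := by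
    conv_lhs => rw [h1]
    exact List.dropLast_cons_of_ne_nil (support_tail_ne_nil p hnil)
  rw [h2, List.mem_cons]
  have h3 : p.support.tail = p.support.tail.dropLast ++ [b] := by
    conv_lhs => rw [← List.dropLast_append_getLast (support_tail_ne_nil p hnil),
      getLast_support_tail p hnil]
  rw [h1, List.mem_cons] at hz
  rcases hz with hz | hz
  · exact Or.inl hz
  · rw [h3, List.mem_append] at hz
    rcases hz with hz | hz
    · exact Or.inr hz
    · exact Or.inl (List.mem_singleton.mp hz)

lemma cycle_dropLast_nodup {b : V} {p : G.Walk b b} (hC : p.IsCycle) :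
    p.support.dropLast.Nodup := by
  have hnil : ¬ p.Nil := hC.not_nil
  have htail : p.support.tail.Nodup := ((Walk.isCycle_def p).mp hC).2.2
  have h2 : p.support.dropLast = b :: p.support.tail.dropLast := by
    conv_lhs => rw [p.support_eq_cons]
    exact List.dropLast_cons_of_ne_nil (support_tail_ne_nil p hnil)
  rw [h2, List.nodup_cons]
  constructor
  · intro hb
    have h3 : p.support.tail = p.support.tail.dropLast ++ [b] := by
      conv_lhs => rw [← List.dropLast_append_getLast (support_tail_ne_nil p hnil),
        getLast_support_tail p hnil]
    have := h3 ▸ htail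
    rw [List.nodup_append] at this
    exact this.2.2 b hb b (List.mem_singleton_self b) rfl
  · exact htail.sublist (List.dropLast_sublist _)

/-! ### successor along a cycle, via darts -/

lemma exists_dart_fst {b c : V} {p : G.Walk b b} (hC : p.IsCycle) (hc : c ∈ p.support) :
    ∃ d ∈ p.darts, d.fst = c := by
  have h1 : c ∈ p.support.dropLast := closed_mem_support_dropLast hC.not_nil hc
  rw [← Walk.map_fst_darts] at h1
  obtain ⟨d, hd, hfst⟩ := List.mem_map.mp h1
  exact ⟨d, hd, hfst⟩

lemma dart_fst_uniq {b : V} {p : G.Walk b b} (hC : p.IsCycle) {d d' : G.Dart}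
    (hd : d ∈ p.darts) (hd' : d' ∈ p.darts) (hfst : d.fst = d'.fst) : d = d' := by
  have hnd : (p.darts.map (·.fst)).Nodup := by
    rw [Walk.map_fst_darts]; exact cycle_dropLast_nodup hC
  exact List.inj_on_of_nodup_map hnd hd hd' hfst

lemma dart_snd_uniq {b : V} {p : G.Walk b b} (hC : p.IsCycle) {d d' : G.Dart}
    (hd : d ∈ p.darts) (hd' : d' ∈ p.darts) (hsnd : d.snd = d'.snd) : d = d' := by
  have hnd : (p.darts.map (·.snd)).Nodup := by
    rw [Walk.map_snd_darts]; exact ((Walk.isCycle_def p).mp hC).2.2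
  exact List.inj_on_of_nodup_map hnd hd hd' hsnd

/-- the dart of the cycle leaving `c` -/
noncomputable def nextDart {b c : V} {p : G.Walk b b} (hC : p.IsCycle)
    (hc : c ∈ p.support) : G.Dart :=
  (exists_dart_fst hC hc).choose

lemma nextDart_mem {b c : V} {p : G.Walk b b} (hC : p.IsCycle) (hc : c ∈ p.support) :
    nextDart hC hc ∈ p.darts := (exists_dart_fst hC hc).choose_spec.1

lemma nextDart_fst {b c : V} {p : G.Walk b b} (hC : p.IsCycle) (hc : c ∈ p.support) :
    (nextDart hC hc).fst = c := (exists_dart_fst hC hc).choose_spec.2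

/-- the successor of `c` along the cycle `p` -/
noncomputable def next {b c : V} {p : G.Walk b b} (hC : p.IsCycle)
    (hc : c ∈ p.support) : V := (nextDart hC hc).snd

lemma adj_next {b c : V} {p : G.Walk b b} (hC : p.IsCycle) (hc : c ∈ p.support) :
    G.Adj c (next hC hc) := by
  have := (nextDart hC hc).adj
  rwa [nextDart_fst hC hc] at this

lemma next_mem_support {b c : V} {p : G.Walk b b} (hC : p.IsCycle) (hc : c ∈ p.support) :
    next hC hc ∈ p.support := by
  have h1 : next hC hc ∈ p.darts.map (·.snd) :=
    List.mem_map.mpr ⟨_, nextDart_mem hC hc, rfl⟩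
  rw [Walk.map_snd_darts] at h1
  exact (closed_mem_support_tail hC.not_nil).mpr h1

lemma next_inj {b c c' : V} {p : G.Walk b b} (hC : p.IsCycle) (hc : c ∈ p.support)
    (hc' : c' ∈ p.support) (hnext : next hC hc = next hC hc') : c = c' := by
  have := dart_snd_uniq hC (nextDart_mem hC hc) (nextDart_mem hC hc') hnext
  rw [← nextDart_fst hC hc, ← nextDart_fst hC hc', this]

/-- identify the successor via any dart of the cycle -/
lemma next_eq_of_dart {b c : V} {p : G.Walk b b} (hC : p.IsCycle) (hc : c ∈ p.support)
    {d : G.Dart} (hd : d ∈ p.darts) (hfst : d.fst = c) : d.snd = next hC hc := by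
  have := dart_fst_uniq hC hd (nextDart_mem hC hc) (by rw [hfst, nextDart_fst])
  rw [this]; rfl

/-! ### rotation decomposition -/

lemma mem_rotate_support [DecidableEq V] {b c z : V} {p : G.Walk b b} (hC : p.IsCycle) (hc : c ∈ p.support) :
    z ∈ (p.rotate c hc).support ↔ z ∈ p.support := by
  have h1 := Walk.support_rotate p c hc
  rw [closed_mem_support_tail (hC.rotate hc).not_nil,
    closed_mem_support_tail hC.not_nil]
  exact h1.mem_iff

lemma rotate_decomp [DecidableEq V] {b c : V} {p : G.Walk b b} (hC : p.IsCycle) (hc : c ∈ p.support) :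
    ∃ (had : G.Adj c (next hC hc)) (q : G.Walk (next hC hc) c),
      p.rotate c hc = Walk.cons had q := by
  obtain ⟨w, had, q, heq⟩ := Walk.not_nil_iff.mp (hC.rotate hc).not_nil
  have hd : (⟨(c, w), had⟩ : G.Dart) ∈ (p.rotate c hc).darts := by
    rw [heq, Walk.darts_cons]; exact List.mem_cons_self
  have hd' : (⟨(c, w), had⟩ : G.Dart) ∈ p.darts := (Walk.rotate_darts p c hc).mem_iff.mp hd
  have hw : w = next hC hc := next_eq_of_dart hC hc hd' rfl
  subst hw
  exact ⟨had, q, heq⟩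



/-! ### the component of `v` in the complement of a cycle -/

def Dset (cyc : G.Walk b b) (v : V) : Set V :=
  {w | ∃ p : G.Walk v w, ∀ z ∈ p.support, z ∉ cyc.support}

lemma mem_Dset_self {b v : V} {cyc : G.Walk b b} (hv : v ∉ cyc.support) :
    v ∈ Dset cyc v :=
  ⟨Walk.nil, fun z hz => by rw [Walk.support_nil, List.mem_singleton] at hz; exact hz ▸ hv⟩

lemma Dset_not_mem_cycle {b v w : V} {cyc : G.Walk b b} (hw : w ∈ Dset cyc v) :
    w ∉ cyc.support := by
  obtain ⟨p, hp⟩ := hw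
  exact hp w p.end_mem_support

lemma Dset_step {b v w z : V} {cyc : G.Walk b b} (hw : w ∈ Dset cyc v)
    (ha : G.Adj w z) (hz : z ∉ cyc.support) : z ∈ Dset cyc v := by
  obtain ⟨p, hp⟩ := hw
  refine ⟨p.concat ha, fun y hy => ?_⟩
  rw [Walk.support_concat, List.mem_append] at hy
  rcases hy with hy | hy
  · exact hp y hy
  · rw [List.mem_singleton] at hy
    exact hy ▸ hz

lemma Dset_of_avoiding_walk [DecidableEq V] {b v w : V} {cyc : G.Walk b b}
    (p : G.Walk v w) (hp : ∀ z ∈ p.support, z ∉ cyc.support) :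
    ∀ z ∈ p.support, z ∈ Dset cyc v := fun z hz =>
  ⟨p.takeUntil z hz, fun y hy => hp y (p.support_takeUntil_subset hz hy)⟩

lemma Dset_path [DecidableEq V] {b v d d' : V} {cyc : G.Walk b b}
    (hd : d ∈ Dset cyc v) (hd' : d' ∈ Dset cyc v) :
    ∃ P : G.Walk d d', P.IsPath ∧ ∀ z ∈ P.support, z ∈ Dset cyc v := by
  obtain ⟨p₁, hp₁⟩ := hd
  obtain ⟨p₂, hp₂⟩ := hd'
  set W := p₁.reverse.append p₂ with hW
  have hWsub : ∀ z ∈ W.support, z ∈ Dset cyc v := by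
    intro z hz
    rw [hW, Walk.mem_support_append_iff] at hz
    rcases hz with hz | hz
    · rw [Walk.support_reverse, List.mem_reverse] at hz
      exact Dset_of_avoiding_walk p₁ hp₁ z hz
    · exact Dset_of_avoiding_walk p₂ hp₂ z hz
  exact ⟨W.toPath, W.toPath.2, fun z hz => hWsub z (W.support_toPath_subset hz)⟩

lemma no_escape {b v : V} {cyc : G.Walk b b} {M NM : Set V}
    (hNM : ∀ z, z ∈ cyc.support → z ∈ M → (∃ d ∈ Dset cyc v, G.Adj z d) → z ∈ NM) :
    ∀ (w₀ w : V) (p : G.Walk w₀ w), w₀ ∈ Dset cyc v →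
      (∀ z ∈ p.support, z ∈ M ∧ z ∉ NM) → w ∈ cyc.support → False := by
  intro w₀ w p
  induction p with
  | nil =>
    intro h0 _ hw
    exact Dset_not_mem_cycle h0 hw
  | @cons w₀ u w h q ih =>
    intro h0 hsup hw
    by_cases hu : u ∈ cyc.support
    · have humem : u ∈ (Walk.cons h q).support := by
        rw [Walk.support_cons]
        exact List.mem_cons_of_mem _ q.start_mem_support
      have : u ∈ NM := hNM u hu (hsup u humem).1 ⟨w₀, h0, h.symm⟩
      exact (hsup u humem).2 this
    · exact ih (Dset_step h0 h hu)
        (fun z hz => hsup z (by rw [Walk.support_cons]; exact List.mem_cons_of_mem _ hz)) hw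

/-! ### surgery 1: splice a path into a cycle at an edge -/

lemma glue [DecidableEq V] {b c : V} {cyc : G.Walk b b} (hC : cyc.IsCycle)
    (hc : c ∈ cyc.support) {a e : V} (P : G.Walk a e) (hP : P.IsPath)
    (hdisj : ∀ z ∈ P.support, z ∉ cyc.support)
    (hca : G.Adj c a) (hey : G.Adj e (next hC hc)) :
    ∃ C' : G.Walk c c, C'.IsCycle ∧ (∀ z ∈ cyc.support, z ∈ C'.support) ∧
      ∀ z ∈ P.support, z ∈ C'.support := by
  obtain ⟨had, q, heq⟩ := rotate_decomp hC hc
  have hrot : (cyc.rotate c hc).IsCycle := hC.rotate hc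
  have hqsupp : (cyc.rotate c hc).support = c :: q.support := by
    rw [heq, Walk.support_cons]
  have hqpath : q.IsPath := by
    rw [Walk.isPath_def]
    have h2 := ((Walk.isCycle_def _).mp hrot).2.2
    rw [hqsupp] at h2
    exact h2
  have hqsub : ∀ z ∈ q.support, z ∈ cyc.support := fun z hz =>
    (mem_rotate_support hC hc).mp (by rw [hqsupp]; exact List.mem_cons_of_mem _ hz)
  set T := P.append (Walk.cons hey q) with hT
  have hTsupp : T.support = P.support ++ q.support := by
    rw [hT, Walk.support_append, Walk.support_cons, List.tail_cons]
  have hTpath : T.IsPath := by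
    rw [Walk.isPath_def, hTsupp]
    exact List.Nodup.append ((Walk.isPath_def _).mp hP) ((Walk.isPath_def _).mp hqpath)
      (fun z hzP hzq => hdisj z hzP (hqsub z hzq))
  refine ⟨Walk.cons hca T, ?_, ?_, ?_⟩
  · rw [Walk.cons_isCycle_iff]
    refine ⟨hTpath, ?_⟩
    rw [hT, Walk.edges_append, Walk.edges_cons]
    intro hmem
    rcases List.mem_append.mp hmem with hm | hm
    · exact hdisj c (Walk.fst_mem_support_of_mem_edges P hm) hc
    · rcases List.mem_cons.mp hm with hm | hm
      · rcases Sym2.eq_iff.mp hm with ⟨h1, _⟩ | ⟨h1, _⟩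
        · exact hdisj e (h1 ▸ P.end_mem_support) (h1 ▸ hc)
        · exact (adj_next hC hc).ne h1
      · exact hdisj a P.start_mem_support (hqsub a (Walk.snd_mem_support_of_mem_edges q hm))
  · intro z hz
    have hz' : z ∈ c :: q.support := by
      rw [← hqsupp]
      exact (mem_rotate_support hC hc).mpr hz
    rw [Walk.support_cons, List.mem_cons]
    rcases List.mem_cons.mp hz' with h | h
    · exact Or.inl h
    · exact Or.inr (by rw [hTsupp, List.mem_append]; exact Or.inr h)
  · intro z hz
    rw [Walk.support_cons, List.mem_cons]
    exact Or.inr (by rw [hTsupp, List.mem_append]; exact Or.inl hz)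

/-! ### surgery 2: exchange two cycle edges for a path and an edge -/

lemma swap [DecidableEq V] {b c c' : V} {cyc : G.Walk b b} (hC : cyc.IsCycle)
    (hc : c ∈ cyc.support) (hc' : c' ∈ cyc.support) (hne : c ≠ c')
    {a e : V} (P : G.Walk a e) (hP : P.IsPath)
    (hdisj : ∀ z ∈ P.support, z ∉ cyc.support)
    (hca : G.Adj c a) (hc'e : G.Adj c' e)
    (hyy : G.Adj (next hC hc) (next hC hc')) :
    ∃ C' : G.Walk c c, C'.IsCycle ∧ (∀ z ∈ cyc.support, z ∈ C'.support) ∧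
      ∀ z ∈ P.support, z ∈ C'.support := by
  obtain ⟨had, q, heq⟩ := rotate_decomp hC hc
  have hrot : (cyc.rotate c hc).IsCycle := hC.rotate hc
  have hqsupp : (cyc.rotate c hc).support = c :: q.support := by
    rw [heq, Walk.support_cons]
  have hqpath : q.IsPath := by
    rw [Walk.isPath_def]
    have h2 := ((Walk.isCycle_def _).mp hrot).2.2
    rw [hqsupp] at h2
    exact h2
  have hqsub : ∀ z ∈ q.support, z ∈ cyc.support := fun z hz =>
    (mem_rotate_support hC hc).mp (by rw [hqsupp]; exact List.mem_cons_of_mem _ hz)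
  have hc'q : c' ∈ q.support := by
    have h3 : c' ∈ (cyc.rotate c hc).support := (mem_rotate_support hC hc).mpr hc'
    rw [hqsupp, List.mem_cons] at h3
    rcases h3 with h3 | h3
    · exact absurd h3.symm hne
    · exact h3
  have hq12 : (q.takeUntil c' hc'q).append (q.dropUntil c' hc'q) = q := q.take_spec hc'q
  set q₁ := q.takeUntil c' hc'q with hq₁def
  set q₂ := q.dropUntil c' hc'q with hq₂def
  have hq₂nil : ¬ q₂.Nil := Walk.not_nil_of_ne (Ne.symm hne)
  obtain ⟨w', h₂, q₃, heq₂⟩ := Walk.not_nil_iff.mp hq₂nil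
  have hw' : w' = next hC hc' := by
    have hd1 : (⟨(c', w'), h₂⟩ : G.Dart) ∈ q₂.darts := by
      rw [heq₂, Walk.darts_cons]; exact List.mem_cons_self
    have hd2 : (⟨(c', w'), h₂⟩ : G.Dart) ∈ q.darts := q.darts_dropUntil_subset hc'q hd1
    have hd3 : (⟨(c', w'), h₂⟩ : G.Dart) ∈ (cyc.rotate c hc).darts := by
      rw [heq, Walk.darts_cons]; exact List.mem_cons_of_mem _ hd2
    exact next_eq_of_dart hC hc' ((Walk.rotate_darts cyc c hc).mem_iff.mp hd3) rfl
  subst hw'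
  -- support decomposition of q
  have hqsupp2 : q.support = q₁.support ++ q₃.support := by
    conv_lhs => rw [← hq12]
    rw [Walk.support_append, heq₂, Walk.support_cons, List.tail_cons]
  have hqnd : (q₁.support ++ q₃.support).Nodup := by
    rw [← hqsupp2]; exact (Walk.isPath_def q).mp hqpath
  rw [List.nodup_append] at hqnd
  obtain ⟨hnd₁, hnd₃, hdisj13⟩ := hqnd
  -- the new cycle
  set Inner := q₁.reverse.append (Walk.cons hyy q₃) with hInnerDef
  set T := P.append (Walk.cons hc'e.symm Inner) with hTdef
  have hInnerSupp : Inner.support = q₁.support.reverse ++ q₃.support := by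
    rw [hInnerDef, Walk.support_append, Walk.support_reverse, Walk.support_cons, List.tail_cons]
  have hTsupp : T.support = P.support ++ (q₁.support.reverse ++ q₃.support) := by
    rw [hTdef, Walk.support_append, Walk.support_cons, List.tail_cons, hInnerSupp]
  have hsub13 : ∀ z, z ∈ q₁.support ∨ z ∈ q₃.support → z ∈ cyc.support := by
    intro z hz
    apply hqsub
    rw [hqsupp2, List.mem_append]
    exact hz
  have hTpath : T.IsPath := by
    rw [Walk.isPath_def, hTsupp]
    refine List.Nodup.append ((Walk.isPath_def _).mp hP) ?_ ?_
    · refine List.Nodup.append (by rwa [List.nodup_reverse]) hnd₃ ?_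
      intro z hz1 hz3
      exact hdisj13 z (List.mem_reverse.mp hz1) z hz3 rfl
    · intro z hzP hz13
      rw [List.mem_append] at hz13
      apply hdisj z hzP
      apply hsub13
      rcases hz13 with hz | hz
      · exact Or.inl (List.mem_reverse.mp hz)
      · exact Or.inr hz
  refine ⟨Walk.cons hca T, ?_, ?_, ?_⟩
  · rw [Walk.cons_isCycle_iff]
    refine ⟨hTpath, ?_⟩
    rw [hTdef, Walk.edges_append, Walk.edges_cons, hInnerDef, Walk.edges_append,
      Walk.edges_cons]
    intro hmem
    rcases List.mem_append.mp hmem with hm | hm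
    · exact hdisj c (Walk.fst_mem_support_of_mem_edges P hm) hc
    · rcases List.mem_cons.mp hm with hm | hm
      · rcases Sym2.eq_iff.mp hm with ⟨h1, _⟩ | ⟨h1, h2⟩
        · exact hdisj e (h1 ▸ P.end_mem_support) (h1 ▸ hc)
        · exact hne h1
      · rcases List.mem_append.mp hm with hm | hm
        · have : a ∈ q₁.reverse.support := Walk.snd_mem_support_of_mem_edges _ hm
          rw [Walk.support_reverse, List.mem_reverse] at this
          exact hdisj a P.start_mem_support (hsub13 a (Or.inl this))
        · rcases List.mem_cons.mp hm with hm | hm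
          · rcases Sym2.eq_iff.mp hm with ⟨h1, _⟩ | ⟨_, h2⟩
            · exact (adj_next hC hc).ne h1
            · exact hdisj a P.start_mem_support (h2 ▸ next_mem_support hC hc)
          · exact hdisj a P.start_mem_support
              (hsub13 a (Or.inr (Walk.snd_mem_support_of_mem_edges q₃ hm)))
  · intro z hz
    have hz' : z ∈ c :: q.support := by
      rw [← hqsupp]
      exact (mem_rotate_support hC hc).mpr hz
    rw [Walk.support_cons, List.mem_cons]
    rcases List.mem_cons.mp hz' with h | h
    · exact Or.inl h
    · rw [hqsupp2, List.mem_append] at h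
      refine Or.inr ?_
      rw [hTsupp, List.mem_append, List.mem_append, List.mem_reverse]
      rcases h with h | h
      · exact Or.inr (Or.inl h)
      · exact Or.inr (Or.inr h)
  · intro z hz
    rw [Walk.support_cons, List.mem_cons]
    exact Or.inr (by rw [hTsupp, List.mem_append]; exact Or.inl hz)

/-- The key absorption lemma: a vertex adjacent to a cycle can be added to it
(keeping all old vertices). -/
lemma key {r : ℕ} (hr : 1 ≤ r) (hlf : ∀ v : V, (G.neighborSet v).Finite)
    (h : ∀ u : V, (G.ballGraph u r).KConn ((G.ballGraph u (r + 1)).indepNumSup))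
    {b x v : V} {C : G.Walk b b} (hC : C.IsCycle)
    (hx : x ∈ C.support) (hv : v ∉ C.support) (hadj : G.Adj v x) :
    ∃ (b' : V) (C' : G.Walk b' b'), C'.IsCycle ∧
      (∀ z ∈ C.support, z ∈ C'.support) ∧ v ∈ C'.support := by
  classical
  by_contra hno
  push_neg at hno
  -- hno : ∀ b' C', IsCycle → coverage → v ∉ support
  have hB1fin : (G.ballSet x (r + 1)).Finite := ballSet_finite hlf x (r + 1)
  have hMfinite : Finite ↥(G.ballSet x r) := (ballSet_finite hlf x r).to_subtype
  have hB1finite : Finite ↥(G.ballSet x (r + 1)) := hB1fin.to_subtype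
  have hxM : x ∈ G.ballSet x r := mem_ballSet_self x r
  have hvM : v ∈ G.ballSet x r := mem_ballSet_of_adj hadj.symm hr
  set k := (G.ballGraph x (r + 1)).indepNumSup with hk
  -- the measure
  set A : Set ℕ := {n | ∃ (b' : V) (C' : G.Walk b' b'), C'.IsCycle ∧
    (∀ z ∈ C.support, z ∈ C'.support) ∧
    (G.ballSet x (r + 1) ∩ {z | z ∈ C'.support}).ncard = n} with hA
  have hA0 : (G.ballSet x (r + 1) ∩ {z | z ∈ C.support}).ncard ∈ A :=
    ⟨b, C, hC, fun z hz => hz, rfl⟩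
  have hAbdd : BddAbove A := by
    refine ⟨(G.ballSet x (r + 1)).ncard, ?_⟩
    rintro n ⟨b', C', -, -, hn⟩
    exact hn ▸ Set.ncard_le_ncard Set.inter_subset_left hB1fin
  obtain ⟨bb, cy, hcy, hcov, hfcy⟩ := Nat.sSup_mem ⟨_, hA0⟩ hAbdd
  have hvcy : v ∉ cy.support := hno _ _ hcy hcov
  have hmaxle : ∀ (b2 : V) (C2 : G.Walk b2 b2), C2.IsCycle →
      (∀ z ∈ C.support, z ∈ C2.support) →
      (G.ballSet x (r + 1) ∩ {z | z ∈ C2.support}).ncard ≤ sSup A :=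
    fun b2 C2 h1 h2 => le_csSup hAbdd ⟨b2, C2, h1, h2, rfl⟩
  have hxcy : x ∈ cy.support := hcov x hx
  have hvD : v ∈ Dset cy v := mem_Dset_self hvcy
  set NM : Set V := {z | z ∈ cy.support ∧ z ∈ G.ballSet x r ∧
    ∃ d ∈ Dset cy v, G.Adj z d} with hNMdef
  have hxNM : x ∈ NM := ⟨hxcy, hxM, v, hvD, hadj.symm⟩
  -- generic surgery outcome: a new cycle covering cy and a D-vertex adjacent to a ball vertex
  have hsurgery : ∀ (c2 : V) (C2 : G.Walk c2 c2), C2.IsCycle →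
      (∀ z ∈ cy.support, z ∈ C2.support) →
      ∀ dd ∈ Dset cy v, dd ∈ G.ballSet x (r+1) → dd ∈ C2.support → False := by
    intro c2 C2 hC2 hcov2 dd hddD hddB1 hddC2
    have hcov2' : ∀ z ∈ C.support, z ∈ C2.support := fun z hz => hcov2 z (hcov z hz)
    have hddcy : dd ∉ cy.support := Dset_not_mem_cycle hddD
    have hsub : (G.ballSet x (r + 1) ∩ {z | z ∈ cy.support}) ⊆
        (G.ballSet x (r + 1) ∩ {z | z ∈ C2.support}) :=
      fun z hz => ⟨hz.1, hcov2 z hz.2⟩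
    have hstrict : (G.ballSet x (r + 1) ∩ {z | z ∈ cy.support}).ncard <
        (G.ballSet x (r + 1) ∩ {z | z ∈ C2.support}).ncard := by
      apply Set.ncard_lt_ncard ?_ (hB1fin.subset Set.inter_subset_left)
      exact (Set.ssubset_iff_of_subset hsub).mpr
        ⟨dd, ⟨hddB1, hddC2⟩, fun hmem => hddcy hmem.2⟩
    rw [hfcy] at hstrict
    exact absurd (hmaxle _ _ hC2 hcov2') (not_le.mpr hstrict)
  -- R1 : successors of local attachments have no D-neighbours
  have hR1 : ∀ (c : V) (hc1 : c ∈ cy.support), c ∈ NM →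
      ∀ d' ∈ Dset cy v, ¬ G.Adj d' (next hcy hc1) := by
    intro c hc1 hcNM d' hd' hadj'
    obtain ⟨-, hcM, dc, hdc, hcadj⟩ := hcNM
    obtain ⟨P, hPpath, hPD⟩ := Dset_path hdc hd'
    have hPdisj : ∀ z ∈ P.support, z ∉ cy.support :=
      fun z hz => Dset_not_mem_cycle (hPD z hz)
    obtain ⟨C2, hC2, hcov2, hcovP⟩ := glue hcy hc1 P hPpath hPdisj hcadj hadj'
    exact hsurgery _ _ hC2 hcov2 dc hdc (mem_ballSet_step hcM hcadj)
      (hcovP dc P.start_mem_support)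
  -- R2 : v is not adjacent to any successor of a local attachment
  have hR2 : ∀ (c : V) (hc1 : c ∈ cy.support), c ∈ NM →
      ¬ G.Adj v (next hcy hc1) := by
    intro c hc1 hcNM hadj'
    obtain ⟨-, hcM, dc, hdc, hcadj⟩ := hcNM
    obtain ⟨P, hPpath, hPD⟩ := Dset_path hdc hvD
    have hPdisj : ∀ z ∈ P.support, z ∉ cy.support :=
      fun z hz => Dset_not_mem_cycle (hPD z hz)
    obtain ⟨C2, hC2, hcov2, hcovP⟩ := glue hcy hc1 P hPpath hPdisj hcadj hadj'
    have hcov2' : ∀ z ∈ C.support, z ∈ C2.support := fun z hz => hcov2 z (hcov z hz)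
    exact hno _ _ hC2 hcov2' (hcovP v P.end_mem_support)
  -- R3 : successors of distinct local attachments are non-adjacent
  have hR3 : ∀ (c c' : V) (hc1 : c ∈ cy.support) (hc1' : c' ∈ cy.support),
      c ∈ NM → c' ∈ NM → c ≠ c' → ¬ G.Adj (next hcy hc1) (next hcy hc1') := by
    intro c c' hc1 hc1' hcNM hc'NM hne hadj'
    obtain ⟨-, hcM, dc, hdc, hcadj⟩ := hcNM
    obtain ⟨-, hc'M, dc', hdc', hc'adj⟩ := hc'NM
    obtain ⟨P, hPpath, hPD⟩ := Dset_path hdc hdc'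
    have hPdisj : ∀ z ∈ P.support, z ∉ cy.support :=
      fun z hz => Dset_not_mem_cycle (hPD z hz)
    obtain ⟨C2, hC2, hcov2, hcovP⟩ := swap hcy hc1 hc1' hne P hPpath hPdisj hcadj hc'adj hadj'
    exact hsurgery _ _ hC2 hcov2 dc hdc (mem_ballSet_step hcM hcadj)
      (hcovP dc P.start_mem_support)
  -- R4 : there are at least k local attachments
  have hNMfin : NM.Finite := by
    apply Set.Finite.subset (cy.support.toFinset : Finset V).finite_toSet
    intro z hz
    simp only [Finset.coe_sort_coe, Finset.mem_coe, List.mem_toFinset]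
    exact hz.1
  have hR4 : k ≤ NM.ncard := by
    by_contra hlt
    push_neg at hlt
    set Z : Set ↥(G.ballSet x r) := {z | ↑z ∈ NM} with hZ
    have hZcard : Z.ncard ≤ NM.ncard := by
      have h1 : Z.ncard = (Subtype.val '' Z).ncard :=
        (Set.ncard_image_of_injective Z Subtype.val_injective).symm
      rw [h1]
      apply Set.ncard_le_ncard ?_ hNMfin
      rintro _ ⟨z, hz, rfl⟩
      exact hz
    obtain ⟨-, hconZ⟩ := h x Z (Set.toFinite Z) (lt_of_le_of_lt hZcard hlt)
    by_cases hcase : ∃ w, w ∈ cy.support ∧ w ∈ G.ballSet x r ∧ w ∉ NM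
    · obtain ⟨w, hwcy, hwM, hwNM⟩ := hcase
      have hv1 : (⟨v, hvM⟩ : ↥(G.ballSet x r)) ∈ Zᶜ := fun hmem => hvcy hmem.1
      have hw1 : (⟨w, hwM⟩ : ↥(G.ballSet x r)) ∈ Zᶜ := fun hmem => hwNM hmem
      obtain ⟨wk⟩ := hconZ.preconnected ⟨_, hv1⟩ ⟨_, hw1⟩
      obtain ⟨q₁, hq₁⟩ := induce_walk_exists wk
      obtain ⟨q₂, hq₂⟩ := induce_walk_exists q₁
      have hsupp : ∀ z ∈ q₂.support, z ∈ G.ballSet x r ∧ z ∉ NM := by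
        intro z hz
        rw [hq₂] at hz; erw [hq₁] at hz; rw [List.map_map] at hz
        obtain ⟨ζ, hζ, rfl⟩ := List.mem_map.mp hz
        exact ⟨(ζ.val).2, ζ.2⟩
      exact no_escape (cyc := cy) (v := v) (M := G.ballSet x r) (NM := NM)
        (fun z h1 h2 h3 => ⟨h1, h2, h3⟩) v w q₂ hvD hsupp hwcy
    · push_neg at hcase
      have hyM : next hcy hxcy ∈ G.ballSet x r :=
        mem_ballSet_of_adj (adj_next hcy hxcy) hr
      have hyNM : next hcy hxcy ∈ NM :=
        hcase _ (next_mem_support hcy hxcy) hyM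
      obtain ⟨-, -, d', hd', hyadj⟩ := hyNM
      exact hR1 x hxcy hxNM d' hd' hyadj.symm
  -- the independent set of size k+1
  set F : V → V := fun c => if hc1 : c ∈ cy.support then next hcy hc1 else c with hF
  set Y : Finset V := hNMfin.toFinset.image F with hY
  have hYcard : Y.card = NM.ncard := by
    rw [hY, Finset.card_image_of_injOn, Set.ncard_eq_toFinset_card _ hNMfin]
    intro c hcmem c' hc'mem heq
    rw [Set.Finite.coe_toFinset] at hcmem hc'mem
    rw [hF] at heq
    simp only [dif_pos hcmem.1, dif_pos hc'mem.1] at heq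
    exact next_inj hcy hcmem.1 hc'mem.1 heq
  have hvY : v ∉ Y := by
    rw [hY]
    intro hmem
    obtain ⟨c, hcmem, hceq⟩ := Finset.mem_image.mp hmem
    rw [Set.Finite.mem_toFinset] at hcmem
    rw [hF] at hceq
    simp only [dif_pos hcmem.1] at hceq
    exact hvcy (hceq ▸ next_mem_support hcy hcmem.1)
  set T : Finset V := insert v Y with hT
  have hTcard : k + 1 ≤ T.card := by
    rw [hT, Finset.card_insert_of_notMem hvY, hYcard]
    omega
  have hTB1 : ∀ z ∈ T, z ∈ G.ballSet x (r + 1) := by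
    intro z hz
    rw [hT, Finset.mem_insert] at hz
    rcases hz with rfl | hz
    · exact mem_ballSet_of_adj hadj.symm (by omega)
    · obtain ⟨c, hcmem, hceq⟩ := Finset.mem_image.mp hz
      rw [Set.Finite.mem_toFinset] at hcmem
      rw [hF] at hceq
      simp only [dif_pos hcmem.1] at hceq
      exact hceq ▸ mem_ballSet_step hcmem.2.1 (adj_next hcy hcmem.1)
  set s : Finset ↥(G.ballSet x (r + 1)) := T.subtype (· ∈ G.ballSet x (r + 1)) with hs
  have hscard : s.card = T.card := by
    rw [hs, Finset.card_subtype, Finset.filter_true_of_mem hTB1]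
  have hindep : ∀ z₁ ∈ s, ∀ z₂ ∈ s, z₁ ≠ z₂ → ¬ (G.ballGraph x (r + 1)).Adj z₁ z₂ := by
    intro z₁ hz₁ z₂ hz₂ hne hadj'
    rw [hs, Finset.mem_subtype] at hz₁ hz₂
    have hGadj : G.Adj ↑z₁ ↑z₂ := hadj'
    rw [hT, Finset.mem_insert] at hz₁ hz₂
    have hmemY : ∀ {z : ↥(G.ballSet x (r+1))}, ↑z ∈ Y →
        ∃ c, ∃ hcNM : c ∈ NM, (z : V) = next hcy hcNM.1 := by
      intro z hz
      obtain ⟨c, hcmem, hceq⟩ := Finset.mem_image.mp hz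
      rw [Set.Finite.mem_toFinset] at hcmem
      rw [hF] at hceq
      simp only [dif_pos hcmem.1] at hceq
      exact ⟨c, hcmem, hceq.symm⟩
    rcases hz₁ with he₁ | he₁ <;> rcases hz₂ with he₂ | he₂
    · exact hne (Subtype.ext (he₁.trans he₂.symm))
    · obtain ⟨c, hcNM, hceq⟩ := hmemY he₂
      exact hR2 c hcNM.1 hcNM (by rw [← hceq, ← he₁]; exact hGadj)
    · obtain ⟨c, hcNM, hceq⟩ := hmemY he₁
      exact hR2 c hcNM.1 hcNM (by rw [← hceq, ← he₂]; exact hGadj.symm)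
    · obtain ⟨c, hcNM, hceq⟩ := hmemY he₁
      obtain ⟨c', hc'NM, hc'eq⟩ := hmemY he₂
      have hcc' : c ≠ c' := by
        intro hcc
        apply hne
        apply Subtype.ext
        rw [hceq, hc'eq]
        subst hcc
        rfl
      exact hR3 c c' hcNM.1 hc'NM.1 hcNM hc'NM hcc' (by rw [← hceq, ← hc'eq]; exact hGadj)
  have hfinal : s.card ≤ k := le_indepNum s hindep
  omega


lemma support_toFinset_nonempty [DecidableEq V] {u w : V} (p : G.Walk u w) :
    p.support.toFinset.Nonempty :=
  ⟨u, List.mem_toFinset.mpr p.start_mem_support⟩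


end KLT

theorem stmt8 {V : Type*} (G : SimpleGraph V)
    (r : ℕ) (hr : 1 ≤ r)
    (hconn : G.Connected)
    (hinf : Infinite V)
    (hlf : ∀ v : V, (G.neighborSet v).Finite)
    (h : ∀ u : V, (G.ballGraph u r).KConn ((G.ballGraph u (r + 1)).indepNumSup)) :
    ∀ S : Set V, S.Finite →
      ∃ (v : V) (c : G.Walk v v), c.IsCycle ∧ ∀ s ∈ S, s ∈ c.support := by
  classical
  intro S hS
  obtain ⟨x₀⟩ : Nonempty V := inferInstance
  obtain ⟨C0, hC0⟩ := KLT.exists_base_cycle (x := x₀) hr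
    (KLT.two_le_indep hconn hinf hlf x₀ (by omega)) hlf (h x₀)
  have main : ∀ (n : ℕ) (b : V) (Cw : G.Walk b b), Cw.IsCycle →
      (∑ s ∈ hS.toFinset,
        Cw.support.toFinset.inf' (KLT.support_toFinset_nonempty Cw) (G.dist s)) ≤ n →
      ∃ (v : V) (c : G.Walk v v), c.IsCycle ∧ ∀ s ∈ S, s ∈ c.support := by
    intro n
    induction n using Nat.strong_induction_on with
    | _ n ih =>
      intro b Cw hCw hsum
      by_cases hall : ∀ s ∈ S, s ∈ Cw.support
      · exact ⟨b, Cw, hCw, hall⟩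
      · push_neg at hall
        obtain ⟨s₀, hs₀S, hs₀⟩ := hall
        obtain ⟨t, ht, hteq⟩ :=
          Finset.exists_mem_eq_inf' (KLT.support_toFinset_nonempty Cw) (G.dist s₀)
        set m := Cw.support.toFinset.inf' (KLT.support_toFinset_nonempty Cw) (G.dist s₀) with hm
        have htC : t ∈ Cw.support := List.mem_toFinset.mp ht
        have hre : G.Reachable s₀ t := hconn.preconnected s₀ t
        have hm1 : 1 ≤ m := by
          by_contra h0
          push_neg at h0
          have hz : G.dist s₀ t = 0 := by omega
          exact hs₀ ((hre.dist_eq_zero_iff.mp hz) ▸ htC)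
        obtain ⟨p, hp⟩ := hre.exists_walk_length_eq_dist
        have hplen : 1 ≤ p.length := by
          rw [hp, ← hteq]; exact hm1
        obtain ⟨w, hadjtw, q, hq⟩ := KLT.exists_last_edge p hplen
        have hwdist : G.dist s₀ w ≤ m - 1 := by
          have h1 : G.dist w s₀ ≤ q.length := SimpleGraph.dist_le q
          have h2 : G.dist s₀ w = G.dist w s₀ := G.dist_comm
          have h3 : p.length = m := by rw [hp, ← hteq]
          omega
        have hwC : w ∉ Cw.support := by
          intro hmem
          have h4 : m ≤ G.dist s₀ w :=
            Finset.inf'_le _ (List.mem_toFinset.mpr hmem)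
          omega
        obtain ⟨b', C', hC', hcov, hvC'⟩ := KLT.key hr hlf h hCw htC hwC hadjtw.symm
        have hterm : ∀ s' ∈ hS.toFinset,
            C'.support.toFinset.inf' (KLT.support_toFinset_nonempty C') (G.dist s') ≤
            Cw.support.toFinset.inf' (KLT.support_toFinset_nonempty Cw) (G.dist s') := by
          intro s' _
          obtain ⟨t', ht', hteq'⟩ :=
            Finset.exists_mem_eq_inf' (KLT.support_toFinset_nonempty Cw) (G.dist s')
          rw [hteq']
          exact Finset.inf'_le _ (List.mem_toFinset.mpr (hcov t' (List.mem_toFinset.mp ht')))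
        have hstrict : C'.support.toFinset.inf' (KLT.support_toFinset_nonempty C') (G.dist s₀) <
            Cw.support.toFinset.inf' (KLT.support_toFinset_nonempty Cw) (G.dist s₀) := by
          have h1 : C'.support.toFinset.inf' (KLT.support_toFinset_nonempty C') (G.dist s₀) ≤
              G.dist s₀ w := Finset.inf'_le _ (List.mem_toFinset.mpr hvC')
          omega
        have hsum' : (∑ s ∈ hS.toFinset,
            C'.support.toFinset.inf' (KLT.support_toFinset_nonempty C') (G.dist s)) <
            (∑ s ∈ hS.toFinset,
            Cw.support.toFinset.inf' (KLT.support_toFinset_nonempty Cw) (G.dist s)) :=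
          Finset.sum_lt_sum hterm ⟨s₀, hS.mem_toFinset.mpr hs₀S, hstrict⟩
        exact ih (∑ s ∈ hS.toFinset,
            C'.support.toFinset.inf' (KLT.support_toFinset_nonempty C') (G.dist s))
          (by omega) b' C' hC' le_rfl
  exact main (∑ s ∈ hS.toFinset,
      C0.support.toFinset.inf' (KLT.support_toFinset_nonempty C0) (G.dist s)) x₀ C0 hC0 le_rfl
end

section
/- Let r ≥ 1 be an integer and let G be a connected finite graph on at least 3 vertices such that for every vertex u of G, the ball G_r(u) is α(G_{r+1}(u))-connected, where α(G_{r+1}(u)) is the independence number of the ball G_{r+1}(u). Then G is Hamiltonian. -/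
open SimpleGraph

namespace LocalCE

open List

variable {V : Type*} {G : SimpleGraph V}

/-- A cyclic list: nodup, length ≥ 3, consecutive adjacency, and wraparound adjacency. -/
def GoodCyc (G : SimpleGraph V) (l : List V) : Prop :=
  l.Nodup ∧ 3 ≤ l.length ∧ l.Chain' G.Adj ∧
    ∀ x ∈ l.getLast?, ∀ y ∈ l.head?, G.Adj x y

open Classical in
/-- cyclic successor in a list -/
noncomputable def csucc (l : List V) (x : V) : V :=
  if h : x ∈ l then l.next x h else x

lemma csucc_get {l : List V} (hnd : l.Nodup) (i : Fin l.length) :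
    csucc l (l.get i) = l.get ⟨(i+1) % l.length, Nat.mod_lt _ (i.1.zero_le.trans_lt i.2)⟩ := by
  classical
  rw [csucc, dif_pos (l.get_mem _)]
  exact List.next_getElem l hnd i i.2

lemma csucc_mem {l : List V} (hx : x ∈ l) : csucc l x ∈ l := by
  classical
  rw [csucc, dif_pos hx]
  exact List.next_mem _ _ _

lemma mod_succ_inj {n a b : ℕ} (ha : a < n) (hb : b < n) (h : (a+1) % n = (b+1) % n) : a = b := by
  rcases Nat.lt_or_ge (a+1) n with h1 | h1 <;> rcases Nat.lt_or_ge (b+1) n with h2 | h2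
  · rw [Nat.mod_eq_of_lt h1, Nat.mod_eq_of_lt h2] at h; omega
  · have hb1 : b + 1 = n := by omega
    rw [Nat.mod_eq_of_lt h1, hb1, Nat.mod_self] at h; omega
  · have ha1 : a + 1 = n := by omega
    rw [ha1, Nat.mod_self, Nat.mod_eq_of_lt h2] at h; omega
  · omega

lemma csucc_injOn {l : List V} (hnd : l.Nodup) {x y : V} (hx : x ∈ l) (hy : y ∈ l)
    (h : csucc l x = csucc l y) : x = y := by
  classical
  obtain ⟨i, rfl⟩ := List.mem_iff_get.1 hx
  obtain ⟨j, rfl⟩ := List.mem_iff_get.1 hy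
  rw [csucc_get hnd, csucc_get hnd] at h
  have hij := Fin.mk_eq_mk.1 ((List.nodup_iff_injective_get.1 hnd) h)
  exact congrArg l.get (Fin.ext (mod_succ_inj i.2 j.2 hij))

lemma adj_csucc (hgc : GoodCyc G l) (hx : x ∈ l) : G.Adj x (csucc l x) := by
  obtain ⟨hnd, hlen, hch, hwrap⟩ := hgc
  obtain ⟨i, rfl⟩ := List.mem_iff_get.1 hx
  rw [csucc_get hnd]
  rcases Nat.lt_or_ge (i.1+1) l.length with h1 | h1
  · rw [show l.Chain' G.Adj ↔ l.IsChain G.Adj from Iff.rfl, List.isChain_iff_getElem] at hch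
    have := hch i.1 (by omega)
    simpa [Nat.mod_eq_of_lt h1] using this
  · have hi2 := i.2
    have hlast : i.1 = l.length - 1 := by omega
    have hmod : (i.1+1) % l.length = 0 := by
      have : i.1 + 1 = l.length := by omega
      simp [this]
    have hne : l ≠ [] := List.ne_nil_of_length_pos (by omega)
    have h1' := hwrap (l.getLast hne) (List.getLast?_eq_getLast hne ▸ rfl)
      (l.head hne) (List.head?_eq_head hne ▸ rfl)
    have e1 : l.get i = l.getLast hne := by
      simp [List.getLast_eq_getElem, hlast]
    have e2 : l.get ⟨(i.1+1) % l.length, Nat.mod_lt _ (i.1.zero_le.trans_lt i.2)⟩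
        = l.head hne := by
      rw [← List.get_mk_zero (by omega)]
      congr 1
      exact Fin.ext hmod
    rw [e1, e2]
    exact h1'

lemma goodCyc_rotate_one (hgc : GoodCyc G l) : GoodCyc G (l.rotate 1) := by
  obtain ⟨hnd, hlen, hch, hwrap⟩ := hgc
  match l, hlen with
  | a :: b :: t, hlen =>
    have hrot : (a :: b :: t).rotate 1 = (b :: t) ++ [a] := by
      rw [List.rotate_cons_succ, List.rotate_zero]
    rw [hrot]
    obtain ⟨hab, hcht⟩ := List.isChain_cons_cons.1 hch
    refine ⟨?_, by simp; simpa using hlen, ?_, ?_⟩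
    · rw [List.nodup_append]
      simp only [List.nodup_cons] at hnd ⊢
      refine ⟨⟨hnd.2.1, hnd.2.2⟩, by simp, ?_⟩
      intro z hz
      simp only [List.mem_singleton, forall_eq]
      rintro rfl
      exact hnd.1 hz
    · refine List.IsChain.append hcht (List.isChain_singleton a) ?_
      intro x hx y hy
      simp only [List.head?_cons, Option.mem_def, Option.some.injEq] at hy
      subst hy
      refine hwrap x ?_ a rfl
      rwa [List.getLast?_cons_cons]
    · intro x hx y hy
      rw [List.getLast?_append_of_ne_nil _ (by simp)] at hx
      simp only [List.getLast?_singleton, Option.mem_def, Option.some.injEq] at hx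
      subst hx
      simp only [List.cons_append, List.head?_cons, Option.mem_def, Option.some.injEq] at hy
      subst hy
      exact hab

lemma goodCyc_rotate (hgc : GoodCyc G l) (k : ℕ) : GoodCyc G (l.rotate k) := by
  induction k with
  | zero => simpa using hgc
  | succ n ih =>
    have : l.rotate (n+1) = (l.rotate n).rotate 1 := by
      rw [List.rotate_rotate, Nat.add_comm]
    rw [this]
    exact goodCyc_rotate_one ih

lemma csucc_rotate {l : List V} (hnd : l.Nodup) (k : ℕ) {x : V} (hx : x ∈ l) :
    csucc (l.rotate k) x = csucc l x := by
  have hx' : x ∈ l.rotate k := List.mem_rotate.2 hx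
  obtain ⟨i, hix⟩ := List.mem_iff_get.1 hx'
  have hnd' : (l.rotate k).Nodup := List.nodup_rotate.2 hnd
  have hlenr : (l.rotate k).length = l.length := List.length_rotate l k
  have hpos : 0 < l.length := List.length_pos_of_mem hx
  rw [← hix, csucc_get hnd']
  rw [List.get_rotate, List.get_rotate]
  have hx2 : x = l.get ⟨(i.1 + k) % l.length, Nat.mod_lt _ hpos⟩ := by
    rw [← hix, List.get_rotate]
  conv_rhs => rw [csucc_get hnd]
  congr 1
  apply Fin.ext
  show ((i.1 + 1) % (l.rotate k).length + k) % l.length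
      = ((i.1 + k) % l.length + 1) % l.length
  simp only [List.length_rotate]
  rw [Nat.mod_add_mod, Nat.mod_add_mod, Nat.add_assoc, Nat.add_assoc,
    Nat.add_comm 1 k]


lemma exists_rotation {l : List V} (hx : x ∈ l) : ∃ (k : ℕ) (t : List V), l.rotate k = x :: t := by
  classical
  have hi : l.idxOf x < l.length := List.idxOf_lt_length_iff.2 hx
  refine ⟨l.idxOf x, (l.rotate (l.idxOf x)).tail, ?_⟩
  have hne : l.rotate (l.idxOf x) ≠ [] := by
    intro hc
    have := List.length_rotate l (l.idxOf x)
    rw [hc] at this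
    simp at this
    omega
  have hhead : (l.rotate (l.idxOf x)).head hne = x := by
    rw [← List.get_mk_zero (List.length_pos_of_ne_nil hne)]
    rw [List.get_rotate]
    have hmod : (0 + l.idxOf x) % l.length = l.idxOf x := by
      rw [Nat.zero_add]; exact Nat.mod_eq_of_lt hi
    simp only [List.get_eq_getElem, hmod]
    have := List.idxOf_get hi
    simpa using this
  conv_lhs => rw [← List.cons_head_tail hne, hhead]

lemma csucc_split_cons {c b : List V} {y z : V} (hnd : (c ++ y :: z :: b).Nodup) :
    csucc (c ++ y :: z :: b) y = z := by
  set l := c ++ y :: z :: b with hl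
  have hclen : c.length < l.length := by
    simp only [hl, List.length_append, List.length_cons]; omega
  have hclen1 : c.length + 1 < l.length := by
    simp only [hl, List.length_append, List.length_cons]; omega
  have hy : l.get ⟨c.length, hclen⟩ = y := by
    simp only [hl, List.get_eq_getElem]
    rw [List.getElem_append_right (le_refl c.length)]
    simp
  rw [← hy, csucc_get hnd]
  have hmod : (c.length + 1) % l.length = c.length + 1 := Nat.mod_eq_of_lt hclen1
  simp only [List.get_eq_getElem, hmod]
  rw [List.getElem_append_right (by omega : c.length ≤ c.length + 1)]
  simp

lemma csucc_split_last {c : List V} {y : V} (hc : c ≠ []) (hnd : (c ++ [y]).Nodup) :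
    csucc (c ++ [y]) y = c.head hc := by
  set l := c ++ [y] with hl
  have hclen : c.length < l.length := by
    simp only [hl, List.length_append, List.length_cons, List.length_nil]; omega
  have hy : l.get ⟨c.length, hclen⟩ = y := by
    simp only [hl, List.get_eq_getElem]
    rw [List.getElem_append_right (le_refl c.length)]
    simp
  rw [← hy, csucc_get hnd]
  have hmod : (c.length + 1) % l.length = 0 := by
    have : l.length = c.length + 1 := by simp [hl]
    simp [this]
  simp only [List.get_eq_getElem, hmod]
  rw [List.getElem_append_left (List.length_pos_of_ne_nil hc)]
  rw [← List.get_mk_zero (List.length_pos_of_ne_nil hc)]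
  simp

lemma exists_crossing {P : V → Prop} {a b : V} (w : G.Walk a b) :
    P a → ¬ P b →
    ∃ x y, G.Adj x y ∧ P x ∧ ¬ P y ∧ x ∈ w.support ∧ y ∈ w.support := by
  induction w with
  | nil => intro ha hb; exact absurd ha hb
  | @cons u v c hadj p ih =>
    intro ha hb
    by_cases hc : P v
    · obtain ⟨x, y, h1, h2, h3, h4, h5⟩ := ih hc hb
      exact ⟨x, y, h1, h2, h3, by simp [h4], by simp [h5]⟩
    · exact ⟨u, v, hadj, ha, hc, by simp, by simp [Walk.start_mem_support]⟩

lemma exists_walk_of_chain :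
    ∀ (t : List V) (x v : V), List.Chain' G.Adj (x :: t) →
      G.Adj ((x :: t).getLast (by simp)) v → v ∉ x :: t →
      ∃ w : G.Walk x v, w.support = x :: t ++ [v] ∧
        ∀ a, s(a, v) ∈ w.edges → a = (x :: t).getLast (by simp)
  | [], x, v => by
    intro hch hadj hnv
    simp only [List.getLast_singleton] at hadj ⊢
    refine ⟨Walk.cons hadj Walk.nil, by simp, ?_⟩
    intro a ha
    simp only [Walk.edges_cons, Walk.edges_nil, List.mem_singleton] at ha
    rcases Sym2.eq_iff.1 ha with ⟨rfl, -⟩ | ⟨h1, h2⟩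
    · rfl
    · rw [h1, h2]
  | y :: t', x, v => by
    intro hch hadj hnv
    obtain ⟨hxy, hch'⟩ := List.isChain_cons_cons.1 hch
    have hlast : (x :: y :: t').getLast (by simp) = (y :: t').getLast (by simp) :=
      List.getLast_cons (by simp)
    obtain ⟨w', hsup, hedge⟩ := exists_walk_of_chain t' y v hch'
      (by rw [← hlast]; exact hadj)
      (fun hmem => hnv (List.mem_cons_of_mem _ hmem))
    refine ⟨Walk.cons hxy w', by simp [hsup], ?_⟩
    intro a ha
    simp only [Walk.edges_cons, List.mem_cons] at ha
    rcases ha with ha | ha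
    · rcases Sym2.eq_iff.1 ha with ⟨h1, h2⟩ | ⟨h1, h2⟩
      · exact absurd (by simp [h2] : v ∈ x :: y :: t') hnv
      · exact absurd (by simp [h2] : v ∈ x :: y :: t') hnv
    · rw [hlast]
      exact hedge a ha

lemma hamiltonian_of_goodCyc {l : List V} (hgc : GoodCyc G l) (hall : ∀ z : V, z ∈ l) :
    G.IsHamiltonianGraph := by
  obtain ⟨hnd, hlen, hch, hwrap⟩ := hgc
  match l, hlen, hnd, hch, hwrap, hall with
  | x :: y :: t', hlen, hnd, hch, hwrap, hall =>
    have ht' : t' ≠ [] := by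
      intro hc
      subst hc
      simp at hlen
    obtain ⟨hxy, hch'⟩ := List.isChain_cons_cons.1 hch
    have hxny : x ∉ y :: t' := by
      simp only [List.nodup_cons] at hnd
      exact hnd.1
    have hlast : (x :: y :: t').getLast (by simp) = (y :: t').getLast (by simp) :=
      List.getLast_cons (by simp)
    have hadjlast : G.Adj ((y :: t').getLast (by simp)) x := by
      have h1 := hwrap ((x :: y :: t').getLast (by simp))
        (by rw [List.getLast?_eq_getLast (by simp)]; rfl) x (by rw [List.head?_cons]; rfl)
      rwa [hlast] at h1
    obtain ⟨w', hsup, hedge⟩ := exists_walk_of_chain t' y x hch' hadjlast hxny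
    have hpath : w'.IsPath := by
      rw [Walk.isPath_def, hsup]
      rw [List.nodup_append]
      refine ⟨(List.nodup_cons.1 hnd).2, by simp, ?_⟩
      intro z hz
      simp only [List.mem_singleton, forall_eq]
      rintro rfl
      exact hxny hz
    have hcyc : (Walk.cons hxy w').IsCycle := by
      rw [Walk.cons_isCycle_iff]
      refine ⟨hpath, ?_⟩
      intro hc
      rw [Sym2.eq_swap] at hc
      have := hedge y hc
      have hmem : (y :: t').getLast (by simp) ∈ t' := by
        rw [List.getLast_cons ht']
        exact List.getLast_mem ht'
      rw [← this] at hmem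
      simp only [List.nodup_cons] at hnd
      exact hnd.2.1 hmem
    refine ⟨x, Walk.cons hxy w', hcyc, ?_⟩
    intro z
    have := hall z
    simp only [Walk.support_cons, hsup]
    simp only [List.mem_cons, List.mem_append, List.mem_singleton] at this ⊢
    tauto

lemma walk_of_doubleInduce {B : Set V} {S : Set B} {a b : B}
    (ha : a ∈ Sᶜ) (hb : b ∈ Sᶜ)
    (hreach : ((G.induce B).induce Sᶜ).Reachable ⟨a, ha⟩ ⟨b, hb⟩) :
    ∃ w : G.Walk a.1 b.1, ∀ z ∈ w.support, ∃ hz : z ∈ B, (⟨z, hz⟩ : B) ∉ S := by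
  obtain ⟨p⟩ := hreach
  let w1 := p.map (Embedding.induce Sᶜ).toHom
  let w2 := w1.map (Embedding.induce B).toHom
  refine ⟨w2, ?_⟩
  intro z hz
  replace hz : z ∈ (w1.map (Embedding.induce B).toHom).support := hz
  rw [Walk.support_map, List.mem_map] at hz
  obtain ⟨z1, hz1, rfl⟩ := hz
  replace hz1 : z1 ∈ (p.map (Embedding.induce Sᶜ).toHom).support := hz1
  rw [Walk.support_map, List.mem_map] at hz1
  obtain ⟨z2, hz2, rfl⟩ := hz1
  obtain ⟨z3, hz4⟩ := z2
  exact ⟨z3.2, hz4⟩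

lemma mem_ballSet_self (u : V) (r : ℕ) : u ∈ G.ballSet u r := ⟨Walk.nil, by simp⟩

lemma mem_ballSet_of_adj {u v : V} {r : ℕ} (h : G.Adj u v) (hr : 1 ≤ r) :
    v ∈ G.ballSet u r := ⟨Walk.cons h Walk.nil, by simpa using hr⟩

lemma mem_ballSet_succ_of_adj {u v w : V} {r : ℕ} (hv : v ∈ G.ballSet u r) (h : G.Adj v w) :
    w ∈ G.ballSet u (r+1) := by
  obtain ⟨p, hp⟩ := hv
  exact ⟨p.append (Walk.cons h Walk.nil), by simp [Walk.length_append]; omega⟩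

lemma ballSet_mono {u : V} {r : ℕ} : G.ballSet u r ⊆ G.ballSet u (r+1) := by
  rintro z ⟨p, hp⟩
  exact ⟨p, by omega⟩

lemma indepNum_ge {W : Type*} [Finite W] (H : SimpleGraph W) (s : Finset W)
    (hs : ∀ x ∈ s, ∀ y ∈ s, x ≠ y → ¬ H.Adj x y) : s.card ≤ H.indepNumSup := by
  haveI := Fintype.ofFinite W
  apply le_csSup
  · refine ⟨Fintype.card W, ?_⟩
    rintro n ⟨t, rfl, -⟩
    exact le_trans (Finset.card_le_univ t) (le_of_eq Finset.card_univ)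
  · exact ⟨s, rfl, hs⟩

/-- Insert a detour `q` right after the head `x` of a cyclic list. Used for two of the
three "longer cycle" surgeries. -/
lemma surg {t q : List V} {x : V} (hgc : GoodCyc G (x :: t)) (ht : t ≠ [])
    (hq : q ≠ []) (hqnd : q.Nodup) (hqch : q.Chain' G.Adj)
    (hdisj : ∀ z ∈ q, z ∉ x :: t)
    (h1 : ∀ a ∈ q.head?, G.Adj x a) (h2 : ∀ a ∈ q.getLast?, ∀ c ∈ t.head?, G.Adj a c) :
    GoodCyc G (x :: (q ++ t)) ∧ (x :: (q ++ t)).length = (x :: t).length + q.length := by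
  obtain ⟨hnd, hlen, hch, hwrap⟩ := hgc
  have hxq : x ∉ q := fun hx => hdisj x hx (by simp)
  have hxt : x ∉ t := (List.nodup_cons.1 hnd).1
  have htnd : t.Nodup := (List.nodup_cons.1 hnd).2
  constructor
  · refine ⟨?_, ?_, ?_, ?_⟩
    · rw [List.nodup_cons, List.nodup_append]
      exact ⟨by simp [hxq, hxt], hqnd, htnd,
        fun z hz w hw hzw => hdisj z hz (by subst hzw; exact List.mem_cons_of_mem _ hw)⟩
    · simp only [List.length_cons, List.length_append]
      simp only [List.length_cons] at hlen
      omega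
    · show List.Chain' G.Adj ((x :: q) ++ t)
      refine List.IsChain.append ?_ (hch.tail) ?_
      · exact List.isChain_cons.2 ⟨h1, hqch⟩
      · intro a ha c hc
        rw [show x :: q = [x] ++ q from rfl, List.getLast?_append_of_ne_nil _ hq] at ha
        exact h2 a ha c hc
    · intro a ha c hc
      simp only [List.head?_cons, Option.mem_def, Option.some.injEq] at hc
      subst hc
      rw [show x :: (q ++ t) = (x :: q) ++ t from rfl,
        List.getLast?_append_of_ne_nil _ ht] at ha
      apply hwrap a ?_ x (by simp)
      rw [show x :: t = [x] ++ t from rfl, List.getLast?_append_of_ne_nil _ ht]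
      exact ha
  · simp only [List.length_cons, List.length_append]
    omega

/-- The crossing-chords surgery: if `x⁺` and `y⁺` are joined (or `y⁺ = x`), reroute. -/
lemma surg2 {x xp y : V} {a2 b q : List V}
    (hgc : GoodCyc G (x :: xp :: (a2 ++ y :: b)))
    (hq : q ≠ []) (hqnd : q.Nodup) (hqch : q.Chain' G.Adj)
    (hdisj : ∀ z ∈ q, z ∉ x :: xp :: (a2 ++ y :: b))
    (h1 : ∀ u ∈ q.head?, G.Adj x u) (h2 : ∀ u ∈ q.getLast?, G.Adj u y)
    (hadj : ∀ u ∈ b.head?, G.Adj xp u) :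
    GoodCyc G (x :: (q ++ y :: ((xp :: a2).reverse ++ b))) ∧
      (x :: (q ++ y :: ((xp :: a2).reverse ++ b))).length
        = (x :: xp :: (a2 ++ y :: b)).length + q.length := by
  obtain ⟨hnd, hlen, hch, hwrap⟩ := hgc
  have hrev : ((xp :: a2).reverse).Perm (xp :: a2) := List.reverse_perm _
  have hDperm : (y :: ((xp :: a2).reverse ++ b)).Perm (xp :: (a2 ++ y :: b)) :=
    (List.Perm.cons y (hrev.append_right b)).trans
      (List.perm_middle (a := y) (l₁ := xp :: a2) (l₂ := b)).symm
  have htnd : (xp :: (a2 ++ y :: b)).Nodup := (List.nodup_cons.1 hnd).2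
  have hxt : x ∉ xp :: (a2 ++ y :: b) := (List.nodup_cons.1 hnd).1
  have hDnd : (y :: ((xp :: a2).reverse ++ b)).Nodup := hDperm.nodup_iff.2 htnd
  have hchtail : List.Chain' G.Adj ((xp :: a2) ++ (y :: b)) := hch.tail
  obtain ⟨chA, chYB, hjoin⟩ := List.isChain_append.1 hchtail
  have hAdjxxp : G.Adj x xp := (List.isChain_cons_cons.1 hch).1
  have hrevne : (xp :: a2).reverse ≠ [] := by simp
  constructor
  · refine ⟨?_, ?_, ?_, ?_⟩
    · rw [List.nodup_cons, List.nodup_append]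
      refine ⟨?_, hqnd, hDnd, ?_⟩
      · intro hx
        rcases List.mem_append.1 hx with hx | hx
        · exact hdisj x hx (by simp)
        · exact hxt (hDperm.mem_iff.1 hx)
      · intro z hz w hw hzw
        subst hzw
        exact hdisj z hz (List.mem_cons_of_mem _ (hDperm.mem_iff.1 hw))
    · simp only [List.length_cons, List.length_append, List.length_reverse]
      omega
    · show List.Chain' G.Adj ((x :: q) ++ (y :: ((xp :: a2).reverse ++ b)))
      refine List.IsChain.append (List.isChain_cons.2 ⟨h1, hqch⟩) ?_ ?_
      · refine List.isChain_cons.2 ⟨?_, ?_⟩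
        · intro u hu
          rw [List.head?_append_of_ne_nil _ hrevne, List.head?_reverse] at hu
          exact (hjoin u hu y (by simp)).symm
        · refine List.IsChain.append ?_ chYB.tail ?_
          · rw [List.isChain_reverse]
            exact chA.imp (fun a c hac => hac.symm)
          · intro u hu c hc
            rw [List.getLast?_reverse, List.head?_cons, Option.mem_def,
              Option.some.injEq] at hu
            subst hu
            exact hadj c hc
      · intro u hu c hc
        rw [show x :: q = [x] ++ q from rfl, List.getLast?_append_of_ne_nil _ hq] at hu
        simp only [List.head?_cons, Option.mem_def, Option.some.injEq] at hc
        subst hc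
        exact h2 u hu
    · intro u hu c hc
      simp only [List.head?_cons, Option.mem_def, Option.some.injEq] at hc
      subst hc
      rw [show x :: (q ++ y :: ((xp :: a2).reverse ++ b))
          = (x :: q) ++ (y :: ((xp :: a2).reverse ++ b)) from rfl,
        List.getLast?_append_of_ne_nil _ (by simp)] at hu
      rcases eq_or_ne b [] with rfl | hb
      · rw [show y :: ((xp :: a2).reverse ++ [])
            = [y] ++ ((xp :: a2).reverse ++ []) from rfl,
          List.getLast?_append_of_ne_nil _ (by simp), List.append_nil,
          List.getLast?_reverse, List.head?_cons, Option.mem_def,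
          Option.some.injEq] at hu
        subst hu
        exact hAdjxxp.symm
      · rw [show y :: ((xp :: a2).reverse ++ b)
            = ([y] ++ (xp :: a2).reverse) ++ b by simp,
          List.getLast?_append_of_ne_nil _ hb] at hu
        apply hwrap u ?_ x (by simp)
        rw [show x :: xp :: (a2 ++ y :: b) = (x :: xp :: a2) ++ (y :: b) by simp,
          List.getLast?_append_of_ne_nil _ (by simp),
          show y :: b = [y] ++ b from rfl, List.getLast?_append_of_ne_nil _ hb]
        exact hu
  · simp only [List.length_cons, List.length_append, List.length_reverse]
    omega
end LocalCE

open LocalCE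

theorem stmt9 {V : Type*} [Fintype V] (G : SimpleGraph V)
    (r : ℕ) (hr : 1 ≤ r)
    (hconn : G.Connected)
    (hcard : 3 ≤ Fintype.card V)
    (h : ∀ u : V, (G.ballGraph u r).KConn ((G.ballGraph u (r + 1)).indepNumSup)) :
    G.IsHamiltonianGraph := by
  classical
  haveI : Nonempty V := Fintype.card_pos_iff.mp (by omega)
  -- Step A: a vertex with two distinct neighbours
  have hmain : ∀ (a b : V), a ≠ b →
      (∃ u x y : V, x ≠ y ∧ G.Adj u x ∧ G.Adj u y) ∨ G.Adj a b := by
    intro a b hab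
    obtain ⟨w⟩ := hconn a b
    obtain ⟨p, hp⟩ : ∃ p : G.Walk a b, p.IsPath := ⟨w.bypass, w.bypass_isPath⟩
    cases p with
    | nil => exact absurd rfl hab
    | @cons _ s1 _ hadj q =>
      cases q with
      | nil => exact Or.inr hadj
      | @cons _ s2 _ hadj2 q2 =>
        left
        refine ⟨s1, a, s2, ?_, hadj.symm, hadj2⟩
        intro hc
        rw [Walk.cons_isPath_iff] at hp
        exact hp.2 (by rw [hc]; simp)
  have hstar : ∃ u x y : V, x ≠ y ∧ G.Adj u x ∧ G.Adj u y := by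
    obtain ⟨v0, w0, hvw⟩ := Fintype.exists_pair_of_one_lt_card (by omega : 1 < Fintype.card V)
    rcases hmain v0 w0 hvw with hyes | hadj0
    · exact hyes
    · obtain ⟨u0, hu0⟩ : ∃ u0 : V, u0 ∉ ({v0, w0} : Finset V) := by
        by_contra hc
        push_neg at hc
        have : (Finset.univ : Finset V).card ≤ ({v0, w0} : Finset V).card :=
          Finset.card_le_card (fun z _ => hc z)
        have h2 : ({v0, w0} : Finset V).card ≤ 2 :=
          le_trans (Finset.card_insert_le _ _) (by simp)
        rw [Finset.card_univ] at this
        omega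
      simp only [Finset.mem_insert, Finset.mem_singleton, not_or] at hu0
      rcases hmain u0 v0 hu0.1 with hyes | hadj1
      · exact hyes
      · exact ⟨v0, u0, w0, fun hc => hu0.2 hc, hadj1.symm, hadj0⟩
  -- Step B: existence of a cycle
  have hcyc_ex : ∃ l : List V, GoodCyc G l := by
    obtain ⟨u, a, b, hab, hua, hub⟩ := hstar
    by_cases hadj : G.Adj a b
    · refine ⟨[u, a, b], ?_, by simp, ?_, ?_⟩
      · simp [G.ne_of_adj hua, G.ne_of_adj hub, hab]
      · simp [List.Chain', List.isChain_cons_cons, hua, hadj]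
      · intro x hx y hy
        simp only [List.getLast?_cons_cons, List.getLast?_singleton, Option.mem_def,
          Option.some.injEq, List.head?_cons] at hx hy
        subst hx; subst hy
        exact hub.symm
    · have haball : a ∈ G.ballSet u (r+1) := mem_ballSet_of_adj hua (by omega)
      have hbball : b ∈ G.ballSet u (r+1) := mem_ballSet_of_adj hub (by omega)
      have hindep : 2 ≤ (G.ballGraph u (r+1)).indepNumSup := by
        have hcard2 : ({⟨a, haball⟩, ⟨b, hbball⟩} : Finset (G.ballSet u (r+1))).card = 2 := by
          rw [Finset.card_insert_of_notMem (by simp [Subtype.ext_iff, hab]),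
            Finset.card_singleton]
        calc 2 = ({⟨a, haball⟩, ⟨b, hbball⟩} : Finset (G.ballSet u (r+1))).card := hcard2.symm
          _ ≤ _ := by
            apply indepNum_ge
            intro x hx y hy hxy hadj2
            simp only [Finset.mem_insert, Finset.mem_singleton] at hx hy
            have : G.Adj x.1 y.1 := hadj2
            rcases hx with rfl | rfl <;> rcases hy with rfl | rfl
            · exact hxy rfl
            · exact hadj this
            · exact hadj this.symm
            · exact hxy rfl
      have huball : u ∈ G.ballSet u r := mem_ballSet_self u r
      obtain ⟨-, hconn2⟩ := h u {(⟨u, huball⟩ : G.ballSet u r)} (Set.finite_singleton _)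
        (by rw [Set.ncard_singleton]; omega)
      have haB : a ∈ G.ballSet u r := mem_ballSet_of_adj hua hr
      have hbB : b ∈ G.ballSet u r := mem_ballSet_of_adj hub hr
      have haS : (⟨a, haB⟩ : G.ballSet u r) ∈ ({(⟨u, huball⟩ : G.ballSet u r)} : Set _)ᶜ := by
        simp [Subtype.ext_iff]
        exact fun hc => G.ne_of_adj hua.symm hc
      have hbS : (⟨b, hbB⟩ : G.ballSet u r) ∈ ({(⟨u, huball⟩ : G.ballSet u r)} : Set _)ᶜ := by
        simp [Subtype.ext_iff]
        exact fun hc => G.ne_of_adj hub.symm hc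
      have hreach := hconn2.preconnected ⟨⟨a, haB⟩, haS⟩ ⟨⟨b, hbB⟩, hbS⟩
      obtain ⟨wab, hwab⟩ := walk_of_doubleInduce (G := G) haS hbS hreach
      set p := wab.bypass with hpdef
      have hpsup : ∀ z ∈ p.support, z ∈ G.ballSet u r ∧ z ≠ u := by
        intro z hz
        obtain ⟨hz1, hz2⟩ := hwab z (Walk.support_bypass_subset _ hz)
        refine ⟨hz1, ?_⟩
        intro hc
        subst hc
        exact hz2 (by simp [Subtype.ext_iff])
      have hpne : p.support ≠ [] := Walk.support_ne_nil _
      have hplen : 1 ≤ p.length := by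
        rcases Nat.lt_or_ge p.length 1 with h1 | h1
        · interval_cases hl : p.length
          · exact absurd (Walk.eq_of_length_eq_zero hl) hab
        · exact h1
      refine ⟨u :: p.support, ⟨?_, ?_, ?_, ?_⟩⟩
      · rw [List.nodup_cons]
        exact ⟨fun hc => (hpsup u hc).2 rfl, (Walk.isPath_def p).1 (Walk.bypass_isPath wab)⟩
      · have := Walk.length_support p
        simp only [List.length_cons]
        omega
      · refine List.isChain_cons.2 ⟨?_, Walk.isChain_adj_support _⟩
        intro y hy
        rw [List.head?_eq_head hpne, Walk.head_support] at hy
        simp only [Option.mem_def, Option.some.injEq] at hy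
        subst hy
        exact hua
      · intro x hx y hy
        simp only [List.head?_cons, Option.mem_def, Option.some.injEq] at hy
        subst hy
        rw [show u :: p.support = [u] ++ p.support from rfl,
          List.getLast?_append_of_ne_nil _ hpne,
          List.getLast?_eq_getLast hpne, Walk.getLast_support] at hx
        simp only [Option.mem_def, Option.some.injEq] at hx
        subst hx
        exact hub.symm
  -- Step C: a longest cycle
  obtain ⟨l, hgc, hmax⟩ : ∃ l, GoodCyc G l ∧ ∀ l', GoodCyc G l' → l'.length ≤ l.length := by
    set Ns : Set ℕ := {n | ∃ l : List V, GoodCyc G l ∧ l.length = n} with hNs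
    have hne : Ns.Nonempty := by
      obtain ⟨l, hl⟩ := hcyc_ex
      exact ⟨l.length, l, hl, rfl⟩
    have hbddA : BddAbove Ns := by
      refine ⟨Fintype.card V, ?_⟩
      rintro n ⟨l, hl, rfl⟩
      exact hl.1.length_le_card
    obtain ⟨l, hl, hln⟩ := Nat.sSup_mem hne hbddA
    exact ⟨l, hl, fun l' hl' => hln ▸ le_csSup hbddA ⟨l', hl', rfl⟩⟩
  by_cases hall : ∀ z : V, z ∈ l
  · exact hamiltonian_of_goodCyc hgc hall
  push_neg at hall
  obtain ⟨z0, hz0⟩ := hall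
  -- Step E: find v ∉ l adjacent to x0 ∈ l
  have hlne : l ≠ [] := by
    intro hc
    have := hgc.2.1
    rw [hc] at this
    simp at this
  obtain ⟨w0⟩ := hconn z0 (l.head hlne)
  obtain ⟨v, x0, hvx0, hv, hx0l', -, -⟩ :=
    exists_crossing (P := fun z => z ∉ l) w0 hz0 (by simp [List.head_mem hlne])
  rw [not_not] at hx0l'
  have hx0l : x0 ∈ l := hx0l'
  -- Step F: the component H of v in G - l
  set H : Set V := {w | ∃ p : G.Walk v w, ∀ z ∈ p.support, z ∉ l} with hHdef
  have hvH : v ∈ H := ⟨Walk.nil, by simpa using hv⟩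
  have hHl : ∀ z ∈ H, z ∉ l := by
    rintro z ⟨p, hp⟩
    exact hp z (Walk.end_mem_support p)
  have hHadj : ∀ p ∈ H, ∀ q, G.Adj p q → q ∉ l → q ∈ H := by
    rintro p ⟨pw, hpw⟩ q hadj hql
    refine ⟨pw.append (Walk.cons hadj Walk.nil), ?_⟩
    intro z hz
    rw [Walk.mem_support_append_iff] at hz
    rcases hz with hz | hz
    · exact hpw z hz
    · have : z = p ∨ z = q := by
        simpa using hz
      rcases this with rfl | rfl
      · exact hpw _ (Walk.end_mem_support pw)
      · exact hql
  have hHpath : ∀ h1 ∈ H, ∀ h2 ∈ H, ∃ qq : List V, qq ≠ [] ∧ qq.Nodup ∧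
      qq.Chain' G.Adj ∧ qq.head? = some h1 ∧ qq.getLast? = some h2 ∧
      ∀ z ∈ qq, z ∉ l := by
    rintro h1 ⟨p1, hp1⟩ h2 ⟨p2, hp2⟩
    set w := (p1.reverse.append p2).bypass with hwdef
    refine ⟨w.support, Walk.support_ne_nil _,
      (Walk.isPath_def w).1 (Walk.bypass_isPath _), Walk.isChain_adj_support _, ?_, ?_, ?_⟩
    · rw [List.head?_eq_head (Walk.support_ne_nil _), Walk.head_support]
    · rw [List.getLast?_eq_getLast (Walk.support_ne_nil _), Walk.getLast_support]
    · intro z hz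
      have hz' := Walk.support_bypass_subset _ hz
      rw [Walk.mem_support_append_iff] at hz'
      rcases hz' with hz' | hz'
      · rw [Walk.support_reverse, List.mem_reverse] at hz'
        exact hp1 z hz'
      · exact hp2 z hz'
  -- Step G: key surgery facts
  have hKey : ∀ x ∈ l, (∃ hh ∈ H, G.Adj x hh) → ∀ e ∈ H, ¬ G.Adj e (csucc l x) := by
    rintro x hxl ⟨hh, hhH, hxh⟩ e heH hadj
    obtain ⟨k, t, hrot⟩ := exists_rotation hxl
    have hgc' : GoodCyc G (x :: t) := by rw [← hrot]; exact goodCyc_rotate hgc k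
    have hsucc : csucc l x = csucc (x :: t) x := by
      rw [← hrot, csucc_rotate hgc.1 k hxl]
    have ht : t ≠ [] := by
      intro hc
      have := hgc'.2.1
      rw [hc] at this
      simp at this
    have hmem_rot : ∀ z, z ∈ x :: t ↔ z ∈ l := by
      intro z
      rw [← hrot]
      exact List.mem_rotate
    obtain ⟨qq, hqne, hqnd, hqch, hqh, hql, hqavoid⟩ := hHpath hh hhH e heH
    have hsurg := surg (G := G) hgc' ht hqne hqnd hqch
      (fun z hz hz2 => hqavoid z hz ((hmem_rot z).1 hz2))
      (by
        intro a ha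
        rw [hqh, Option.mem_def, Option.some.injEq] at ha
        subst ha
        exact hxh)
      (by
        intro a ha c hc
        rw [hql, Option.mem_def, Option.some.injEq] at ha
        subst ha
        rw [List.head?_eq_head ht, Option.mem_def, Option.some.injEq] at hc
        subst hc
        have hht : csucc (x :: t) x = t.head ht := by
          match t, ht with
          | z :: b, _ => exact csucc_split_cons (c := []) hgc'.1
        rw [← hht, ← hsucc]
        exact hadj)
    have hlen2 := hmax _ hsurg.1
    rw [hsurg.2] at hlen2
    have hlrot : (x :: t).length = l.length := by rw [← hrot, List.length_rotate]
    have : 1 ≤ qq.length := List.length_pos_iff.2 hqne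
    omega
  have hSurg1 : ∀ x ∈ l, ∀ y ∈ l, x ≠ y → (∃ hh ∈ H, G.Adj x hh) →
      (∃ hh ∈ H, G.Adj y hh) → ¬ G.Adj (csucc l x) (csucc l y) := by
    rintro x hxl y hyl hxy ⟨h1v, h1H, hxh1⟩ ⟨h2v, h2H, hyh2⟩ hadj
    obtain ⟨k, t, hrot⟩ := exists_rotation hxl
    have hgc' : GoodCyc G (x :: t) := by rw [← hrot]; exact goodCyc_rotate hgc k
    have hsuccx : csucc l x = csucc (x :: t) x := by
      rw [← hrot, csucc_rotate hgc.1 k hxl]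
    have hsuccy : csucc l y = csucc (x :: t) y := by
      rw [← hrot, csucc_rotate hgc.1 k hyl]
    have ht : t ≠ [] := by
      intro hc
      have := hgc'.2.1
      rw [hc] at this
      simp at this
    have hmem_rot : ∀ z, z ∈ x :: t ↔ z ∈ l := by
      intro z
      rw [← hrot]
      exact List.mem_rotate
    match t, ht, hgc', hsuccx, hsuccy, hmem_rot with
    | xp :: t2, ht, hgc', hsuccx, hsuccy, hmem_rot =>
      have hxpsucc : csucc l x = xp := by
        rw [hsuccx]
        exact csucc_split_cons (c := []) hgc'.1
      have hyne_xp : y ≠ xp := by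
        intro hc
        apply hKey x hxl ⟨h1v, h1H, hxh1⟩ h2v h2H
        rw [hxpsucc, ← hc]
        exact hyh2.symm
      have hyt2 : y ∈ t2 := by
        have := (hmem_rot y).2 hyl
        simp only [List.mem_cons] at this
        rcases this with rfl | rfl | h2
        · exact absurd rfl hxy
        · exact absurd rfl hyne_xp
        · exact h2
      obtain ⟨a2, b, hab2⟩ := List.append_of_mem hyt2
      subst hab2
      obtain ⟨qq, hqne, hqnd, hqch, hqh, hql, hqavoid⟩ := hHpath h1v h1H h2v h2H
      have hgc'' : GoodCyc G (x :: xp :: (a2 ++ y :: b)) := hgc'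
      have hsuccy2 : csucc l y = csucc ((x :: xp :: a2) ++ y :: b) y := hsuccy
      have hsurg := surg2 (G := G) hgc'' hqne hqnd hqch
        (fun z hz hz2 => hqavoid z hz ((hmem_rot z).1 hz2))
        (by
          intro u hu
          rw [hqh, Option.mem_def, Option.some.injEq] at hu
          subst hu
          exact hxh1)
        (by
          intro u hu
          rw [hql, Option.mem_def, Option.some.injEq] at hu
          subst hu
          exact hyh2.symm)
        (by
          intro u hu
          match b, hu with
          | z :: b2, hu =>
            simp only [List.head?_cons, Option.mem_def, Option.some.injEq] at hu
            subst hu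
            have : csucc l y = z := by
              rw [hsuccy2]
              exact csucc_split_cons hgc''.1
            rw [← hxpsucc, ← this]
            exact hadj)
      have hlen2 := hmax _ hsurg.1
      rw [hsurg.2] at hlen2
      have hlrot : (x :: xp :: (a2 ++ y :: b)).length = l.length := by
        rw [← hrot, List.length_rotate]
      have : 1 ≤ qq.length := List.length_pos_iff.2 hqne
      omega
  -- Step H: the independent set
  have hSCfin : {x | x ∈ l ∧ x ∈ G.ballSet x0 r ∧ ∃ hh ∈ H, G.Adj x hh}.Finite :=
    Set.Finite.subset (l.finite_toSet) (fun z hz => hz.1)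
  set Sfin : Finset V := hSCfin.toFinset with hSfindef
  have hSfinmem : ∀ z, z ∈ Sfin ↔
      (z ∈ l ∧ z ∈ G.ballSet x0 r ∧ ∃ hh ∈ H, G.Adj z hh) := by
    intro z
    rw [hSfindef, Set.Finite.mem_toFinset]
    rfl
  set I : Finset V := insert v (Sfin.image (csucc l)) with hIdef
  have hvl : v ∉ Finset.image (csucc l) Sfin := by
    intro hc
    obtain ⟨x, hx, hxe⟩ := Finset.mem_image.1 hc
    have : csucc l x ∈ l := csucc_mem ((hSfinmem x).1 hx).1
    rw [hxe] at this
    exact hv this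
  have hIcard : I.card = Sfin.card + 1 := by
    rw [hIdef, Finset.card_insert_of_notMem hvl, Finset.card_image_of_injOn]
    intro x hx y hy hxy
    exact csucc_injOn hgc.1 ((hSfinmem x).1 (Finset.mem_coe.1 hx)).1
      ((hSfinmem y).1 (Finset.mem_coe.1 hy)).1 hxy
  have hIball : ∀ z ∈ I, z ∈ G.ballSet x0 (r+1) := by
    intro z hz
    rcases Finset.mem_insert.1 hz with rfl | hz
    · exact mem_ballSet_of_adj hvx0.symm (by omega)
    · obtain ⟨x, hx, rfl⟩ := Finset.mem_image.1 hz
      exact mem_ballSet_succ_of_adj ((hSfinmem x).1 hx).2.1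
        (adj_csucc hgc ((hSfinmem x).1 hx).1)
  have hIindep : ∀ a ∈ I, ∀ b ∈ I, a ≠ b → ¬ G.Adj a b := by
    intro a ha b hb hab hadj
    rcases Finset.mem_insert.1 ha with rfl | ha' <;> rcases Finset.mem_insert.1 hb with rfl | hb'
    · exact hab rfl
    · obtain ⟨x, hx, rfl⟩ := Finset.mem_image.1 hb'
      obtain ⟨hxl2, hxb, hh, hhH, hxhh⟩ := (hSfinmem x).1 hx
      exact hKey x hxl2 ⟨hh, hhH, hxhh⟩ a hvH hadj
    · obtain ⟨x, hx, rfl⟩ := Finset.mem_image.1 ha'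
      obtain ⟨hxl2, hxb, hh, hhH, hxhh⟩ := (hSfinmem x).1 hx
      exact hKey x hxl2 ⟨hh, hhH, hxhh⟩ b hvH hadj.symm
    · obtain ⟨x, hx, rfl⟩ := Finset.mem_image.1 ha'
      obtain ⟨y, hy, rfl⟩ := Finset.mem_image.1 hb'
      obtain ⟨hxl2, hxb, hhx⟩ := (hSfinmem x).1 hx
      obtain ⟨hyl2, hyb, hhy⟩ := (hSfinmem y).1 hy
      have hxy : x ≠ y := fun hc => hab (by rw [hc])
      exact hSurg1 x hxl2 y hyl2 hxy hhx hhy hadj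
  set J : Finset (G.ballSet x0 (r+1)) :=
    I.attach.image (fun z => (⟨z.1, hIball z.1 z.2⟩ : G.ballSet x0 (r+1))) with hJdef
  have hJcard : J.card = I.card := by
    have hinj : Set.InjOn
        (fun z : {x // x ∈ I} => (⟨z.1, hIball z.1 z.2⟩ : G.ballSet x0 (r+1)))
        ↑I.attach :=
      fun a _ b _ hab2 => by
        apply Subtype.ext
        have h3 := congrArg Subtype.val hab2
        simpa using h3
    rw [hJdef, Finset.card_image_of_injOn hinj]
    exact Finset.card_attach
  have hindepJ : Sfin.card + 1 ≤ (G.ballGraph x0 (r+1)).indepNumSup := by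
    have hind : ∀ p ∈ J, ∀ q ∈ J, p ≠ q → ¬ (G.ballGraph x0 (r+1)).Adj p q := by
      intro p hp q hq hpq hadj
      rw [hJdef] at hp hq
      obtain ⟨p1, hp1, rfl⟩ := Finset.mem_image.1 hp
      obtain ⟨q1, hq1, rfl⟩ := Finset.mem_image.1 hq
      have hadj' : G.Adj p1.1 q1.1 := hadj
      exact hIindep p1.1 p1.2 q1.1 q1.2 (fun hc => hpq (Subtype.ext hc)) hadj'
    have h2 := indepNum_ge (G.ballGraph x0 (r+1)) J hind
    rw [hJcard, hIcard] at h2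
    exact h2
  -- Step I: the cut
  set SS : Set (G.ballSet x0 r) := {z | z.1 ∈ Sfin} with hSSdef
  have hSSncard : SS.ncard ≤ Sfin.card := by
    calc SS.ncard = (Subtype.val '' SS).ncard :=
          (Set.ncard_image_of_injective _ Subtype.val_injective).symm
      _ ≤ (↑Sfin : Set V).ncard :=
          Set.ncard_le_ncard (by rintro z ⟨w, hw, rfl⟩; exact hw) (Sfin.finite_toSet)
      _ = Sfin.card := Set.ncard_coe_finset _
  obtain ⟨-, hconn3⟩ := h x0 SS (Set.toFinite _) (by omega)
  have hvB : v ∈ G.ballSet x0 r := mem_ballSet_of_adj hvx0.symm hr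
  have hvSS : (⟨v, hvB⟩ : G.ballSet x0 r) ∈ SSᶜ := by
    intro hc
    exact hv ((hSfinmem v).1 hc).1
  have hx0succl : csucc l x0 ∈ l := csucc_mem hx0l
  have hxpB : csucc l x0 ∈ G.ballSet x0 r := mem_ballSet_of_adj (adj_csucc hgc hx0l) hr
  have hxpSS : (⟨csucc l x0, hxpB⟩ : G.ballSet x0 r) ∈ SSᶜ := by
    intro hc
    obtain ⟨-, -, hh, hhH, hxphh⟩ := (hSfinmem _).1 hc
    exact hKey x0 hx0l ⟨v, hvH, hvx0.symm⟩ hh hhH hxphh.symm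
  have hreach := hconn3.preconnected ⟨⟨v, hvB⟩, hvSS⟩ ⟨⟨csucc l x0, hxpB⟩, hxpSS⟩
  obtain ⟨wfin, hwfin⟩ := walk_of_doubleInduce (G := G) hvSS hxpSS hreach
  have hxpnotH : csucc l x0 ∉ H := fun hc => hHl _ hc hx0succl
  obtain ⟨pp, qq2, hpq, hpH, hqH, -, hqsup⟩ :=
    exists_crossing (P := (· ∈ H)) wfin hvH hxpnotH
  obtain ⟨hqball, hqnotS⟩ := hwfin qq2 hqsup
  exfalso
  by_cases hq2l : qq2 ∈ l
  · exact hqnotS ((hSfinmem qq2).2 ⟨hq2l, hqball, pp, hpH, hpq.symm⟩)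
  · exact hqH (hHadj pp hpH qq2 hpq hq2l)
end

section
/- Let G be a locally finite graph in which d_G(u) + d_G(v) ≥ |M_2(w)| − 1 holds for every path uwv with uv ∉ E(G). Suppose v, w, x are three distinct vertices of G such that vw ∈ E(G), wx ∈ E(G), vx ∉ E(G), and w is the only common neighbor of v and x (i.e., N(v) ∩ N(x) = {w}). Then x is adjacent to every vertex of M_2(w) \ (M_1(v) ∪ {x}). -/
open SimpleGraph

/-- The independence number of a graph: the supremum of the sizes of finite sets of
pairwise non-adjacent vertices. -/
noncomputable def SimpleGraph.indepNumOld {W : Type*} (H : SimpleGraph W) : ℕ :=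
  sSup {n | ∃ s : Finset W, s.card = n ∧ ∀ x ∈ s, ∀ y ∈ s, x ≠ y → ¬ H.Adj x y}

lemma mem_ball2_iff {V : Type*} (G : SimpleGraph V) (w y : V) :
    y ∈ G.ballSet w 2 ↔ y = w ∨ G.Adj w y ∨ ∃ z, G.Adj w z ∧ G.Adj z y := by
  constructor
  · rintro ⟨p, hp⟩
    match p with
    | .nil => exact Or.inl rfl
    | .cons h .nil => exact Or.inr (Or.inl h)
    | .cons h (.cons h' .nil) => exact Or.inr (Or.inr ⟨_, h, h'⟩)
    | .cons h (.cons h' (.cons h'' q)) => simp [SimpleGraph.Walk.length_cons] at hp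
  · rintro (rfl | h | ⟨z, h1, h2⟩)
    · exact ⟨.nil, by simp [SimpleGraph.Walk.length_nil]⟩
    · exact ⟨.cons h .nil, by simp⟩
    · exact ⟨.cons h1 (.cons h2 .nil), by simp⟩

theorem stmt14 {V : Type*} (G : SimpleGraph V)
    (hlf : ∀ v : V, (G.neighborSet v).Finite)
    (hdeg : ∀ u w v : V, u ≠ v → G.Adj u w → G.Adj w v → ¬ G.Adj u v →
      ((G.neighborSet u).ncard : ℤ) + ((G.neighborSet v).ncard : ℤ) ≥
        ((G.ballSet w 2).ncard : ℤ) - 1)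
    (v w x : V) (hvx : v ≠ x)
    (hvw : G.Adj v w) (hwx : G.Adj w x) (hna : ¬ G.Adj v x)
    (hcommon : G.neighborSet v ∩ G.neighborSet x = {w}) :
    ∀ y ∈ G.ballSet w 2 \ (G.ballSet v 1 ∪ {x}), G.Adj x y := by
  set A := G.neighborSet v with hAdef
  set B := G.neighborSet x with hBdef
  have hA : A.Finite := hlf v
  have hB : B.Finite := hlf x
  have hSsub : G.ballSet w 2 ⊆ insert w (G.neighborSet w ∪ ⋃ z ∈ G.neighborSet w, G.neighborSet z) := by
    intro y hy
    rcases (mem_ball2_iff G w y).1 hy with rfl | h | ⟨z, h1, h2⟩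
    · exact Set.mem_insert _ _
    · exact Set.mem_insert_of_mem _ (Or.inl h)
    · exact Set.mem_insert_of_mem _ (Or.inr (Set.mem_biUnion h1 h2))
  have hS : (G.ballSet w 2).Finite :=
    Set.Finite.subset (((hlf w).union ((hlf w).biUnion (fun z _ => hlf z))).insert w) hSsub
  have hAball : A ⊆ G.ballSet w 2 := by
    intro y hy
    exact (mem_ball2_iff G w y).2 (Or.inr (Or.inr ⟨v, hvw.symm, hy⟩))
  have hBball : B ⊆ G.ballSet w 2 := by
    intro y hy
    exact (mem_ball2_iff G w y).2 (Or.inr (Or.inr ⟨x, hwx, hy⟩))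
  have hvball : v ∈ G.ballSet w 2 := (mem_ball2_iff G w v).2 (Or.inr (Or.inl hvw.symm))
  have hxball : x ∈ G.ballSet w 2 := (mem_ball2_iff G w x).2 (Or.inr (Or.inl hwx))
  have hvA : v ∉ A := fun h => G.irrefl h
  have hvB : v ∉ B := fun h => hna ((G.adj_symm h))
  have hxA : x ∉ A := fun h => hna h
  have hxB : x ∉ B := fun h => G.irrefl h
  set T := insert v (insert x (A ∪ B)) with hTdef
  have hTsub : T ⊆ G.ballSet w 2 := by
    intro y hy
    rcases hy with rfl | rfl | hy | hy
    · exact hvball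
    · exact hxball
    · exact hAball hy
    · exact hBball hy
  have hABfin : (A ∪ B).Finite := hA.union hB
  have hTcard : T.ncard = A.ncard + B.ncard + 1 := by
    have h1 : (A ∪ B).ncard + (A ∩ B).ncard = A.ncard + B.ncard :=
      Set.ncard_union_add_ncard_inter A B hA hB
    have h2 : (A ∩ B).ncard = 1 := by rw [hcommon]; simp
    have h3 : (insert x (A ∪ B)).ncard = (A ∪ B).ncard + 1 :=
      Set.ncard_insert_of_notMem (by simp [hxA, hxB]) hABfin
    have h4 : T.ncard = (insert x (A ∪ B)).ncard + 1 :=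
      Set.ncard_insert_of_notMem (by simp [hvA, hvB, hvx]) (hABfin.insert x)
    omega
  have hTle : T.ncard ≤ (G.ballSet w 2).ncard := Set.ncard_le_ncard hTsub hS
  have hdeg' : (A.ncard : ℤ) + (B.ncard : ℤ) ≥ ((G.ballSet w 2).ncard : ℤ) - 1 :=
    hdeg v w x hvx hvw hwx hna
  have hSle : (G.ballSet w 2).ncard ≤ T.ncard := by
    rw [hTcard]; omega
  have hTS : T = G.ballSet w 2 := Set.eq_of_subset_of_ncard_le hTsub hSle hS
  intro y hy
  obtain ⟨hyS, hy2⟩ := hy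
  have hyv1 : y ∉ G.ballSet v 1 := fun h => hy2 (Or.inl h)
  have hyx : y ≠ x := fun h => hy2 (Or.inr h)
  have hyv : y ≠ v := by
    rintro rfl
    exact hyv1 ⟨.nil, by simp⟩
  have hyA : y ∉ A := by
    intro h
    exact hyv1 ⟨.cons ((G.mem_neighborSet v y).1 h) .nil, by simp⟩
  rw [← hTS] at hyS
  rcases hyS with rfl | rfl | h | h
  · exact absurd rfl hyv
  · exact absurd rfl hyx
  · exact absurd h hyA
  · exact h
end

section
/- For every integer r ≥ 1 there exists a connected, infinite, locally finite graph G that is not claw-free and satisfies the following: for every vertex u of G, the ball G_r(u) is α(G_{r+1}(u))-connected, where α(G_{r+1}(u)) is the independence number of the ball G_{r+1}(u). -/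
open SimpleGraph

def inT {m : ℕ} (b : Fin m) : Prop := b.val = 1 ∨ b.val = 2 ∨ b.val = 3

instance {m : ℕ} (b : Fin m) : Decidable (inT b) := by unfold inT; infer_instance

def Gr (r : ℕ) : SimpleGraph (ℤ × Fin (r + 6)) where
  Adj p q := p ≠ q ∧ |p.1 - q.1| ≤ 1 ∧ ¬(p.1 = 0 ∧ q.1 = 0 ∧ inT p.2 ∧ inT q.2)
  symm := by
    constructor
    rintro p q ⟨h1, h2, h3⟩
    exact ⟨h1.symm, by rwa [abs_sub_comm], fun ⟨a, b, c, d⟩ => h3 ⟨b, a, d, c⟩⟩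
  loopless := by constructor; rintro p ⟨h, -⟩; exact h rfl

lemma Gr_adj {r : ℕ} {p q : ℤ × Fin (r + 6)} :
    (Gr r).Adj p q ↔ p ≠ q ∧ |p.1 - q.1| ≤ 1 ∧ ¬(p.1 = 0 ∧ q.1 = 0 ∧ inT p.2 ∧ inT q.2) :=
  Iff.rfl

lemma adj_of_col {r : ℕ} {p q : ℤ × Fin (r + 6)} (h1 : p.1 ≠ q.1) (h2 : |p.1 - q.1| ≤ 1) :
    (Gr r).Adj p q :=
  ⟨fun e => h1 (by rw [e]), h2, by rintro ⟨e1, e2, -⟩; exact h1 (e1.trans e2.symm)⟩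

lemma mem_ballSet {V : Type*} {G : SimpleGraph V} {u v : V} {n : ℕ} :
    v ∈ G.ballSet u n ↔ ∃ p : G.Walk u v, p.length ≤ n := Iff.rfl

lemma walk_col {r : ℕ} {a b : ℤ × Fin (r + 6)} (p : (Gr r).Walk a b) :
    |b.1 - a.1| ≤ (p.length : ℤ) := by
  induction p with
  | nil => simp
  | @cons x y z h q ih =>
    have h1 : |y.1 - x.1| ≤ 1 := by rw [abs_sub_comm]; exact h.2.1
    have h2 := abs_sub_le z.1 y.1 x.1
    rw [SimpleGraph.Walk.length_cons]
    push_cast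
    linarith

lemma mem_ballSet_col {r n : ℕ} {u v : ℤ × Fin (r + 6)} (hv : v ∈ (Gr r).ballSet u n) :
    |v.1 - u.1| ≤ (n : ℤ) := by
  obtain ⟨p, hp⟩ := hv
  exact le_trans (walk_col p) (by exact_mod_cast hp)

lemma horiz {r : ℕ} (b : Fin (r + 6)) :
    ∀ (n : ℕ) (i j : ℤ), |j - i| ≤ (n : ℤ) →
      ∃ p : (Gr r).Walk (i, b) (j, b), p.length ≤ n := by
  intro n
  induction n with
  | zero =>
    intro i j h
    rw [abs_le] at h
    have : j = i := by omega
    subst this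
    exact ⟨SimpleGraph.Walk.nil, by simp⟩
  | succ n ih =>
    intro i j h
    rw [abs_le] at h
    by_cases hij : j = i
    · subst hij; exact ⟨SimpleGraph.Walk.nil, by simp⟩
    · rcases (Ne.lt_or_gt (fun e => hij e.symm) : i < j ∨ j < i) with hlt | hlt
      · obtain ⟨p, hp⟩ := ih (i + 1) j (by rw [abs_le]; omega)
        refine ⟨SimpleGraph.Walk.cons (adj_of_col (by simp) ?_) p, ?_⟩
        · show |i - (i+1)| ≤ 1
          rw [abs_le]; omega
        · rw [SimpleGraph.Walk.length_cons]; omega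
      · obtain ⟨p, hp⟩ := ih (i - 1) j (by rw [abs_le]; omega)
        refine ⟨SimpleGraph.Walk.cons (adj_of_col (by simp; omega) ?_) p, ?_⟩
        · show |i - (i-1)| ≤ 1
          rw [abs_le]; omega
        · rw [SimpleGraph.Walk.length_cons]; omega

lemma ball_cross {r n : ℕ} {u v : ℤ × Fin (r + 6)} (h : v.1 ≠ u.1)
    (hd : |v.1 - u.1| ≤ (n : ℤ)) : v ∈ (Gr r).ballSet u n := by
  obtain ⟨j, b⟩ := v
  simp only at h hd
  have h1 : (1 : ℤ) ≤ |j - u.1| := Int.one_le_abs (sub_ne_zero.mpr h)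
  have hn : 1 ≤ n := by exact_mod_cast h1.trans hd
  rw [abs_le] at hd
  rcases (Ne.lt_or_gt (h : j ≠ u.1)) with hlt | hlt
  · -- j < u.1 : step to u.1 - 1
    have hadj : (Gr r).Adj u (u.1 - 1, b) := adj_of_col (by simp; omega) (by simp [abs_le])
    obtain ⟨p, hp⟩ := horiz b (n - 1) (u.1 - 1) j (by rw [abs_le]; omega)
    exact ⟨SimpleGraph.Walk.cons hadj p, by rw [SimpleGraph.Walk.length_cons]; omega⟩
  · have hadj : (Gr r).Adj u (u.1 + 1, b) := adj_of_col (by simp) (by simp [abs_le])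
    obtain ⟨p, hp⟩ := horiz b (n - 1) (u.1 + 1) j (by rw [abs_le]; omega)
    exact ⟨SimpleGraph.Walk.cons hadj p, by rw [SimpleGraph.Walk.length_cons]; omega⟩

lemma ball_self {r n : ℕ} (u : ℤ × Fin (r + 6)) : u ∈ (Gr r).ballSet u n :=
  ⟨SimpleGraph.Walk.nil, by simp⟩

lemma ball_adj {r n : ℕ} {u v : ℤ × Fin (r + 6)} (h : (Gr r).Adj u v) (hn : 1 ≤ n) :
    v ∈ (Gr r).ballSet u n :=
  ⟨SimpleGraph.Walk.cons h SimpleGraph.Walk.nil, by simpa⟩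

lemma Gr_connected (r : ℕ) : (Gr r).Connected := by
  rw [connected_iff]
  refine ⟨fun u v => ?_, ⟨(0, 0)⟩⟩
  by_cases h : u = v
  · subst h; exact SimpleGraph.Reachable.refl u
  · have h1 : (Gr r).Adj u (u.1 + 1, v.2) := adj_of_col (by simp) (by simp [abs_le])
    obtain ⟨p, -⟩ := horiz (r := r) v.2 (u.1 + 1 - v.1).natAbs (u.1 + 1) v.1
      (by rw [abs_sub_comm, Int.abs_eq_natAbs])
    exact (h1.reachable).trans ⟨p⟩

lemma Gr_locallyFinite (r : ℕ) (v : ℤ × Fin (r + 6)) : ((Gr r).neighborSet v).Finite := by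
  apply Set.Finite.subset (Set.Finite.prod (Set.finite_Icc (v.1 - 1) (v.1 + 1))
    (Set.finite_univ (α := Fin (r + 6))))
  intro w hw
  have h2 : |v.1 - w.1| ≤ 1 := hw.2.1
  rw [abs_le] at h2
  exact ⟨Set.mem_Icc.mpr ⟨by omega, by omega⟩, Set.mem_univ _⟩

lemma Gr_claw (r : ℕ) : Nonempty (completeBipartiteGraph Unit (Fin 3) ↪g (Gr r)) := by
  refine ⟨⟨⟨Sum.elim (fun _ => ((0 : ℤ), (⟨0, by omega⟩ : Fin (r + 6))))
    (fun k => ((0 : ℤ), (⟨k.val + 1, by omega⟩ : Fin (r + 6)))), ?_⟩, ?_⟩⟩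
  · rintro (a | a) (b | b) h
    · simp
    · simp only [Sum.elim_inl, Sum.elim_inr, Prod.mk.injEq, Fin.mk.injEq] at h
      omega
    · simp only [Sum.elim_inl, Sum.elim_inr, Prod.mk.injEq, Fin.mk.injEq] at h
      omega
    · simp only [Sum.elim_inr, Prod.mk.injEq, Fin.mk.injEq] at h
      have : a = b := Fin.ext (by omega)
      rw [this]
  · rintro (a | a) (b | b)
    · simp [completeBipartiteGraph]
    · simp only [Function.Embedding.coeFn_mk, Sum.elim_inl, Sum.elim_inr, completeBipartiteGraph]
      simp only [Sum.isLeft_inl, Sum.isRight_inr, Sum.isRight_inl, Sum.isLeft_inr]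
      constructor
      · intro; simp
      · intro
        refine ⟨by intro e; have := congrArg (fun z : ℤ × Fin (r+6) => z.2.val) e; simp at this, by simp, ?_⟩
        rintro ⟨-, -, hT, -⟩
        simp [inT] at hT
    · simp only [Function.Embedding.coeFn_mk, Sum.elim_inl, Sum.elim_inr, completeBipartiteGraph]
      simp only [Sum.isLeft_inl, Sum.isRight_inr, Sum.isRight_inl, Sum.isLeft_inr]
      constructor
      · intro; simp
      · intro
        refine ⟨by intro e; have := congrArg (fun z : ℤ × Fin (r+6) => z.2.val) e; simp at this, by simp, ?_⟩
        rintro ⟨-, -, -, hT⟩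
        simp [inT] at hT
    · simp only [Function.Embedding.coeFn_mk, Sum.elim_inr, completeBipartiteGraph]
      simp only [Sum.isLeft_inr, Sum.isRight_inr, Sum.isRight_inl, Sum.isLeft_inl]
      constructor
      · rintro ⟨hne, -, hbl⟩
        exfalso
        apply hbl
        refine ⟨rfl, rfl, ?_, ?_⟩ <;> simp [inT] <;> omega
      · simp

lemma ballGraph_adj {r n : ℕ} {u : ℤ × Fin (r+6)} {x y : ((Gr r).ballSet u n)} :
    ((Gr r).ballGraph u n).Adj x y ↔ (Gr r).Adj x.1 y.1 := Iff.rfl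

lemma Tfin_card (r : ℕ) : (Finset.univ.filter (fun b : Fin (r + 6) => inT b)).card ≤ 3 := by
  have := Finset.card_le_card_of_injOn
    (s := Finset.univ.filter (fun b : Fin (r + 6) => inT b))
    (f := fun b : Fin (r+6) => b.val)
    (t := ({1, 2, 3} : Finset ℕ))
    (fun b hb => by
      have h2 : inT b := (Finset.mem_filter.mp hb).2
      rcases h2 with h | h | h <;> simp [h])
    (fun x _ y _ h => Fin.ext h)
  exact le_trans this (by decide)

lemma indep_bound (r : ℕ) (u : ℤ × Fin (r + 6)) :
    ((Gr r).ballGraph u (r + 1)).indepNumOld ≤ r + 4 := by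
  unfold SimpleGraph.indepNumOld
  refine csSup_le ⟨0, ?_⟩ ?_
  · exact ⟨∅, by simp⟩
  rintro n ⟨s, hcard, hindep⟩
  subst hcard
  classical
  set col : ((Gr r).ballSet u (r+1)) → ℤ := fun x => x.1.1 with hcol
  set I := s.image col with hI
  -- non-adjacency consequences
  have hkey : ∀ x ∈ s, ∀ y ∈ s, x ≠ y → |x.1.1 - y.1.1| ≤ 1 →
      x.1.1 = 0 ∧ y.1.1 = 0 ∧ inT x.1.2 ∧ inT y.1.2 := by
    intro x hx y hy hxy hle
    have hnadj := hindep x hx y hy hxy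
    rw [ballGraph_adj, Gr_adj] at hnadj
    push_neg at hnadj
    exact hnadj (fun e => hxy (Subtype.ext e)) hle
  have hsep : ∀ c ∈ I, ∀ c' ∈ I, c ≠ c' → 2 ≤ |c - c'| := by
    intro c hc c' hc' hne
    obtain ⟨x, hx, hxc⟩ := Finset.mem_image.mp hc
    obtain ⟨y, hy, hyc⟩ := Finset.mem_image.mp hc'
    have hxc' : x.1.1 = c := hxc
    have hyc' : y.1.1 = c' := hyc
    have hxy : x ≠ y := fun e => hne (by rw [← hxc', ← hyc', e])
    by_contra hcon
    push_neg at hcon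
    obtain ⟨e1, e2, -⟩ := hkey x hx y hy hxy (by
      rcases abs_cases (x.1.1 - y.1.1) with ⟨e, -⟩ | ⟨e, -⟩ <;>
      rcases abs_cases (c - c') with ⟨f, hf⟩ | ⟨f, hf⟩ <;> omega)
    exact hne (by omega)
  have hwin : ∀ c ∈ I, u.1 - (r + 1) ≤ c ∧ c ≤ u.1 + (r + 1) := by
    intro c hc
    obtain ⟨x, hx, hxc⟩ := Finset.mem_image.mp hc
    have hxc' : x.1.1 = c := hxc
    have := mem_ballSet_col x.2
    rw [abs_le] at this
    push_cast at this
    omega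
  have hIcard : I.card ≤ r + 2 := by
    have := Finset.card_le_card_of_injOn
      (f := fun c : ℤ => ((c - (u.1 - (r + 1))) / 2).toNat)
      (t := Finset.range (r + 2))
      (fun c hc => by
        obtain ⟨h1, h2⟩ := hwin c hc
        simp only [Finset.mem_coe, Finset.mem_range]
        omega)
      (fun c hc c' hc' h => by
        by_contra hne
        have h' : ((c - (u.1 - ((r:ℤ) + 1))) / 2).toNat
            = ((c' - (u.1 - ((r:ℤ) + 1))) / 2).toNat := h
        obtain ⟨h1, h2⟩ := hwin c hc
        obtain ⟨h3, h4⟩ := hwin c' hc'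
        have := hsep c hc c' hc' hne
        rcases abs_cases (c - c') with ⟨e, -⟩ | ⟨e, -⟩ <;> omega)
    simpa using this
  have hfib : ∀ c ∈ I, (s.filter (fun x => col x = c)).card ≤ if c = 0 then 3 else 1 := by
    intro c hc
    by_cases hc0 : c = 0
    · subst hc0
      simp only [eq_self_iff_true, if_true]
      set F := s.filter (fun x => col x = 0) with hF
      rcases le_or_gt F.card 1 with h | h
      · omega
      · have hT : ∀ x ∈ F, inT x.1.2 := by
          intro x hx
          obtain ⟨y, hy, hyx⟩ := Finset.exists_mem_ne h x
          have hxc' : x.1.1 = 0 := (Finset.mem_filter.mp hx).2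
          have hyc' : y.1.1 = 0 := (Finset.mem_filter.mp hy).2
          obtain ⟨-, -, h3, -⟩ := hkey x (Finset.mem_filter.mp hx).1 y
            (Finset.mem_filter.mp hy).1 (fun e => hyx e.symm) (by rw [hxc', hyc']; simp)
          exact h3
        have hinj : Set.InjOn (fun x : ((Gr r).ballSet u (r+1)) => x.1.2) F := by
          intro x hx y hy hxy
          have hxy' : x.1.2 = y.1.2 := hxy
          have hxc' : x.1.1 = 0 := (Finset.mem_filter.mp (Finset.mem_coe.mp hx)).2
          have hyc' : y.1.1 = 0 := (Finset.mem_filter.mp (Finset.mem_coe.mp hy)).2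
          exact Subtype.ext (Prod.ext (by rw [hxc', hyc']) hxy')
        have := Finset.card_le_card_of_injOn (f := fun x : ((Gr r).ballSet u (r+1)) => x.1.2)
          (t := Finset.univ.filter (fun b : Fin (r + 6) => inT b))
          (fun x hx => Finset.mem_filter.mpr ⟨Finset.mem_univ _, hT x hx⟩)
          hinj
        exact le_trans this (Tfin_card r)
    · simp only [if_neg hc0]
      rw [Finset.card_le_one]
      intro x hx y hy
      have hxc' : x.1.1 = c := (Finset.mem_filter.mp hx).2
      have hyc' : y.1.1 = c := (Finset.mem_filter.mp hy).2
      by_contra hxy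
      obtain ⟨e1, -, -⟩ := hkey x (Finset.mem_filter.mp hx).1 y (Finset.mem_filter.mp hy).1
        hxy (by rw [hxc', hyc']; simp)
      exact hc0 (by omega)
  calc s.card = ∑ c ∈ I, (s.filter (fun x => col x = c)).card :=
        Finset.card_eq_sum_card_image col s
    _ ≤ ∑ c ∈ I, (if c = 0 then 3 else 1) := Finset.sum_le_sum hfib
    _ = ∑ c ∈ I, ((if c = 0 then 2 else 0) + 1) := by
        apply Finset.sum_congr rfl; intro c _; split <;> rfl
    _ = (∑ c ∈ I, (if c = 0 then 2 else 0)) + I.card := by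
        rw [Finset.sum_add_distrib]; simp
    _ ≤ 2 + I.card := by
        have : (∑ c ∈ I, (if c = 0 then 2 else 0)) = if (0:ℤ) ∈ I then 2 else 0 :=
          Finset.sum_ite_eq' I (0 : ℤ) (fun _ => 2)
        rw [this]; split <;> omega
    _ ≤ r + 4 := by omega

lemma kconn (r : ℕ) (hr : 1 ≤ r) (u : ℤ × Fin (r + 6)) :
    ((Gr r).ballGraph u r).KConn (r + 4) := by
  intro S hSfin hScard
  classical
  have hSvalfin : (Subtype.val '' S).Finite := hSfin.image _
  have hSvalcard : (Subtype.val '' S).ncard < r + 4 := by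
    rw [Set.ncard_image_of_injective _ Subtype.val_injective]; exact hScard
  have hcov : ∀ j : ℤ, j ≠ u.1 → |j - u.1| ≤ (r : ℤ) → ∀ b : Fin (r + 6),
      ((j, b) : ℤ × Fin (r + 6)) ∈ (Gr r).ballSet u r := fun j hj hd b => ball_cross hj hd
  have hnotB : ∀ b : Fin (r + 6), (u.1, b) ∉ (Gr r).ballSet u r →
      inT b ∧ b ≠ u.2 ∧ inT u.2 := by
    intro b hb
    by_cases he : b = u.2
    · subst he; exact absurd (by rw [Prod.mk.eta]; exact ball_self u) hb
    · have hbl : u.1 = 0 ∧ u.1 = 0 ∧ inT u.2 ∧ inT b := by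
        by_contra hbl
        exact hb (ball_adj ⟨fun e => he ((congrArg Prod.snd e).symm), by simp, hbl⟩ hr)
      exact ⟨hbl.2.2.2, he, hbl.2.2.1⟩
  -- survivors in every column of the ball
  have hsurv : ∀ j : ℤ, ∃ v : ℤ × Fin (r + 6),
      j ∈ Set.Icc (u.1 - (r : ℤ)) (u.1 + r) →
        v.1 = j ∧ v ∈ (Gr r).ballSet u r ∧ v ∉ Subtype.val '' S := by
    intro j
    by_cases hj : j ∈ Set.Icc (u.1 - (r : ℤ)) (u.1 + r)
    swap
    · exact ⟨u, fun h => absurd h hj⟩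
    obtain ⟨hj1, hj2⟩ := Set.mem_Icc.mp hj
    have hGBcard : r + 4 ≤ (Finset.univ.filter
        (fun b : Fin (r + 6) => ((j, b) : ℤ × Fin (r + 6)) ∈ (Gr r).ballSet u r)).card := by
      have hsub : Finset.univ ⊆ (Finset.univ.filter
          (fun b : Fin (r + 6) => ((j, b) : ℤ × Fin (r + 6)) ∈ (Gr r).ballSet u r)) ∪
          (Finset.univ.filter (fun b : Fin (r + 6) => inT b ∧ b ≠ u.2 ∧ inT u.2)) := by
        intro b _
        by_cases hbB : ((j, b) : ℤ × Fin (r + 6)) ∈ (Gr r).ballSet u r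
        · exact Finset.mem_union_left _ (Finset.mem_filter.mpr ⟨Finset.mem_univ _, hbB⟩)
        · refine Finset.mem_union_right _ (Finset.mem_filter.mpr ⟨Finset.mem_univ _, ?_⟩)
          by_cases hju : j = u.1
          · subst hju; exact hnotB b hbB
          · exact absurd (hcov j hju (by rw [abs_le]; omega) b) hbB
      have hbadcard : (Finset.univ.filter
          (fun b : Fin (r + 6) => inT b ∧ b ≠ u.2 ∧ inT u.2)).card ≤ 2 := by
        by_cases hu2 : inT u.2
        · have hsub2 : (Finset.univ.filter
              (fun b : Fin (r + 6) => inT b ∧ b ≠ u.2 ∧ inT u.2)) ⊆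
              (Finset.univ.filter (fun b : Fin (r + 6) => inT b)).erase u.2 := by
            intro b hbmem
            obtain ⟨-, h1, h2, -⟩ := Finset.mem_filter.mp hbmem
            exact Finset.mem_erase.mpr ⟨h2, Finset.mem_filter.mpr ⟨Finset.mem_univ _, h1⟩⟩
          have h3 := Finset.card_erase_of_mem
            (Finset.mem_filter.mpr ⟨Finset.mem_univ _, hu2⟩ :
              u.2 ∈ Finset.univ.filter (fun b : Fin (r + 6) => inT b))
          have h4 := Tfin_card r
          have := Finset.card_le_card hsub2
          omega
        · have hempty : (Finset.univ.filter
              (fun b : Fin (r + 6) => inT b ∧ b ≠ u.2 ∧ inT u.2)) = ∅ := by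
            rw [Finset.eq_empty_iff_forall_notMem]
            intro b hbmem
            exact hu2 (Finset.mem_filter.mp hbmem).2.2.2
          rw [hempty]; simp
      have h5 := (Finset.card_le_card hsub).trans (Finset.card_union_le _ _)
      simp only [Finset.card_univ, Fintype.card_fin] at h5
      omega
    have hmap : ((Finset.univ.filter
        (fun b : Fin (r + 6) => ((j, b) : ℤ × Fin (r + 6)) ∈ (Gr r).ballSet u r)).filter
          (fun b => ((j, b) : ℤ × Fin (r + 6)) ∈ Subtype.val '' S)).card
        ≤ (Subtype.val '' S).ncard := by
      have h6 := Finset.card_le_card_of_injOn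
        (s := (Finset.univ.filter
          (fun b : Fin (r + 6) => ((j, b) : ℤ × Fin (r + 6)) ∈ (Gr r).ballSet u r)).filter
            (fun b => ((j, b) : ℤ × Fin (r + 6)) ∈ Subtype.val '' S))
        (f := fun b : Fin (r + 6) => ((j, b) : ℤ × Fin (r + 6)))
        (t := hSvalfin.toFinset)
        (fun b hb => (Set.Finite.mem_toFinset _).mpr (Finset.mem_filter.mp hb).2)
        (fun x _ y _ h => ((Prod.mk.injEq j x j y).mp h).2)
      rwa [Set.ncard_eq_toFinset_card _ hSvalfin]
    have hnon : ((Finset.univ.filter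
        (fun b : Fin (r + 6) => ((j, b) : ℤ × Fin (r + 6)) ∈ (Gr r).ballSet u r)).filter
          (fun b => ((j, b) : ℤ × Fin (r + 6)) ∉ Subtype.val '' S)).Nonempty := by
      by_contra hne
      rw [Finset.not_nonempty_iff_eq_empty] at hne
      have hsplit := Finset.card_filter_add_card_filter_not
        (s := Finset.univ.filter
          (fun b : Fin (r + 6) => ((j, b) : ℤ × Fin (r + 6)) ∈ (Gr r).ballSet u r))
        (p := fun b => ((j, b) : ℤ × Fin (r + 6)) ∈ Subtype.val '' S)
      rw [hne] at hsplit
      simp only [Finset.card_empty] at hsplit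
      omega
    obtain ⟨b, hb⟩ := hnon
    obtain ⟨hb1, hb2⟩ := Finset.mem_filter.mp hb
    exact ⟨(j, b), fun _ => ⟨rfl, (Finset.mem_filter.mp hb1).2, hb2⟩⟩
  choose t ht using hsurv
  have huIcc : u.1 ∈ Set.Icc (u.1 - (r : ℤ)) (u.1 + r) := Set.mem_Icc.mpr ⟨by omega, by omega⟩
  have hp1 : u.1 + 1 ∈ Set.Icc (u.1 - (r : ℤ)) (u.1 + r) := Set.mem_Icc.mpr ⟨by omega, by omega⟩
  have hm1 : u.1 - 1 ∈ Set.Icc (u.1 - (r : ℤ)) (u.1 + r) := Set.mem_Icc.mpr ⟨by omega, by omega⟩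
  constructor
  · -- Sᶜ.Nontrivial
    obtain ⟨e1, e2, e3⟩ := ht (u.1 + 1) hp1
    obtain ⟨f1, f2, f3⟩ := ht (u.1 - 1) hm1
    refine ⟨⟨t (u.1 + 1), e2⟩, fun hmem => e3 ⟨_, hmem, rfl⟩,
      ⟨t (u.1 - 1), f2⟩, fun hmem => f3 ⟨_, hmem, rfl⟩, ?_⟩
    intro hcon
    have hcol : (t (u.1 + 1)).1 = (t (u.1 - 1)).1 := congrArg (fun z => z.1.1) hcon
    rw [e1, f1] at hcol
    omega
  · -- connectivity
    obtain ⟨g1, g2, g3⟩ := ht u.1 huIcc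
    have hadjGG : ∀ (a c : ↥(Sᶜ)), (Gr r).Adj a.1.1 c.1.1 →
        (((Gr r).ballGraph u r).induce Sᶜ).Adj a c := fun a c h => h
    let mk : ∀ v : ℤ × Fin (r + 6), v ∈ (Gr r).ballSet u r → v ∉ Subtype.val '' S → ↥(Sᶜ) :=
      fun v hvB hvS => ⟨⟨v, hvB⟩, fun hmem => hvS ⟨⟨v, hvB⟩, hmem, rfl⟩⟩
    have hchain : ∀ n : ℕ, ∀ j, ∀ hj : j ∈ Set.Icc (u.1 - (r : ℤ)) (u.1 + r),
        |j - u.1| ≤ (n : ℤ) →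
        (((Gr r).ballGraph u r).induce Sᶜ).Reachable
          (mk (t j) (ht j hj).2.1 (ht j hj).2.2) (mk (t u.1) g2 g3) := by
      intro n
      induction n with
      | zero =>
        intro j hj hd
        have hj0 : j = u.1 := by rw [abs_le] at hd; omega
        subst hj0
        exact SimpleGraph.Reachable.refl _
      | succ n ih =>
        intro j hj hd
        by_cases he : j = u.1
        · subst he; exact SimpleGraph.Reachable.refl _
        · obtain ⟨hj1, hj2⟩ := Set.mem_Icc.mp hj
          rw [abs_le] at hd
          rcases Ne.lt_or_gt he with hlt | hlt
          · have hj' : j + 1 ∈ Set.Icc (u.1 - (r : ℤ)) (u.1 + r) :=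
              Set.mem_Icc.mpr ⟨by omega, by omega⟩
            have hadj : (Gr r).Adj (t j) (t (j + 1)) := adj_of_col
              (by rw [(ht j hj).1, (ht (j + 1) hj').1]; omega)
              (by rw [(ht j hj).1, (ht (j + 1) hj').1, abs_le]; omega)
            exact ((hadjGG _ _ hadj).reachable).trans (ih (j + 1) hj' (by rw [abs_le]; omega))
          · have hj' : j - 1 ∈ Set.Icc (u.1 - (r : ℤ)) (u.1 + r) :=
              Set.mem_Icc.mpr ⟨by omega, by omega⟩
            have hadj : (Gr r).Adj (t j) (t (j - 1)) := adj_of_col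
              (by rw [(ht j hj).1, (ht (j - 1) hj').1]; omega)
              (by rw [(ht j hj).1, (ht (j - 1) hj').1, abs_le]; omega)
            exact ((hadjGG _ _ hadj).reachable).trans (ih (j - 1) hj' (by rw [abs_le]; omega))
    rw [SimpleGraph.connected_iff]
    have hreach : ∀ x : ↥(Sᶜ),
        (((Gr r).ballGraph u r).induce Sᶜ).Reachable x (mk (t u.1) g2 g3) := by
      intro x
      have hxcol := mem_ballSet_col x.1.2
      rw [abs_le] at hxcol
      by_cases hxr : x.1.1.1 < u.1 + r
      · have hj' : x.1.1.1 + 1 ∈ Set.Icc (u.1 - (r : ℤ)) (u.1 + r) :=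
          Set.mem_Icc.mpr ⟨by omega, by omega⟩
        have hadj : (Gr r).Adj x.1.1 (t (x.1.1.1 + 1)) := adj_of_col
          (by rw [(ht _ hj').1]; omega) (by rw [(ht _ hj').1, abs_le]; omega)
        exact ((hadjGG x (mk (t _) (ht _ hj').2.1 (ht _ hj').2.2) hadj).reachable).trans
          (hchain (r + 1) _ hj' (by rw [abs_le]; push_cast; omega))
      · have hj' : x.1.1.1 - 1 ∈ Set.Icc (u.1 - (r : ℤ)) (u.1 + r) :=
          Set.mem_Icc.mpr ⟨by omega, by omega⟩
        have hadj : (Gr r).Adj x.1.1 (t (x.1.1.1 - 1)) := adj_of_col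
          (by rw [(ht _ hj').1]; omega) (by rw [(ht _ hj').1, abs_le]; omega)
        exact ((hadjGG x (mk (t _) (ht _ hj').2.1 (ht _ hj').2.2) hadj).reachable).trans
          (hchain (r + 1) _ hj' (by rw [abs_le]; push_cast; omega))
    exact ⟨fun x y => (hreach x).trans (hreach y).symm, ⟨mk (t u.1) g2 g3⟩⟩

theorem stmt16 (r : ℕ) (hr : 1 ≤ r) :
    ∃ (V : Type) (G : SimpleGraph V),
      G.Connected ∧
      Infinite V ∧
      (∀ v : V, (G.neighborSet v).Finite) ∧
      Nonempty (completeBipartiteGraph Unit (Fin 3) ↪g G) ∧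
      ∀ u : V, (G.ballGraph u r).KConn ((G.ballGraph u (r + 1)).indepNumOld) := by
  refine ⟨ℤ × Fin (r + 6), Gr r, Gr_connected r, by infer_instance, Gr_locallyFinite r,
    Gr_claw r, ?_⟩
  intro u S hSfin hScard
  exact kconn r hr u S hSfin (lt_of_lt_of_le hScard (indep_bound r u))
end
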